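/- arXiv:2304.05713 — 10 statements merged into one kernel-verified Lean document; each statement's English description precedes it below -/
import Mathlib

section
/- Let H be a real inner product space, A : H → H a linear map, m ≥ 1 an integer, and ξ_1,…,ξ_m ∈ H linearly independent. Let G be the m×m Gram matrix with entries G_{ik} = ⟪ξ_i, ξ_k⟫, and for each j ∈ {1,…,m} let M^{(j)} be the matrix obtained from G by replacing its j-th row with (⟪A ξ_j, ξ_k⟫)_{k=1}^m. Then for every orthonormal basis (b_1,…,b_m) of the span of {ξ_1,…,ξ_m}: ∑_{j=1}^m det M^{(j)} = det G · ∑_{i=1}^m ⟪A b_i, b_i⟫. -/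
open Matrix in
lemma aux_det_updateRow_lin {m : ℕ} (C : Matrix (Fin m) (Fin m) ℝ) (j : Fin m)
    (v : Fin m → ℝ) :
    (C.updateRow j v).det = ∑ k, v k * C.adjugate k j := by
  have hv : v = ∑ k, v k • (Pi.single k 1 : Fin m → ℝ) := by
    ext i; simp [Pi.single_apply]
  calc (C.updateRow j v).det = Cᵀ.cramer v j := (cramer_transpose_apply C v j).symm
    _ = Cᵀ.cramer (∑ k, v k • (Pi.single k 1 : Fin m → ℝ)) j := by rw [← hv]
    _ = ∑ k, v k * Cᵀ.cramer (Pi.single k 1 : Fin m → ℝ) j := by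
        rw [map_sum]
        simp only [_root_.map_smul, Finset.sum_apply, Pi.smul_apply, smul_eq_mul]
    _ = ∑ k, v k * C.adjugate k j := by
        refine Finset.sum_congr rfl fun k _ => ?_
        rw [adjugate_apply, ← cramer_transpose_apply]

open Matrix in
lemma aux_matrix_identity {m : ℕ} (C B : Matrix (Fin m) (Fin m) ℝ) :
    ∑ j, ((C * Cᵀ).updateRow j ((C * B * Cᵀ) j)).det = (C * Cᵀ).det * B.trace := by
  have h1 : ∀ j, (C * Cᵀ).updateRow j ((C * B * Cᵀ) j)
      = (C.updateRow j ((C * B) j)) * Cᵀ := by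
    intro j; ext i k
    by_cases h : i = j
    · subst h; simp [mul_apply]
    · simp [mul_apply, updateRow_ne h]
  have h2 : ∑ j, (C.updateRow j ((C * B) j)).det = C.det * B.trace := by
    simp_rw [aux_det_updateRow_lin]
    rw [Finset.sum_comm]
    have h3 : ∀ k : Fin m, ∑ j, (C * B) j k * C.adjugate k j
        = (C.adjugate * (C * B)) k k := by
      intro k; rw [mul_apply]
      exact Finset.sum_congr rfl fun j _ => mul_comm _ _
    calc ∑ k, ∑ j, (C * B) j k * C.adjugate k j
        = ∑ k, (C.adjugate * (C * B)) k k := by simp_rw [h3]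
      _ = (C.adjugate * (C * B)).trace := rfl
      _ = C.det * B.trace := by
          rw [← mul_assoc, adjugate_mul, smul_mul, one_mul, trace_smul, smul_eq_mul]
  calc ∑ j, ((C * Cᵀ).updateRow j ((C * B * Cᵀ) j)).det
      = ∑ j, (C.updateRow j ((C * B) j)).det * Cᵀ.det := by
        refine Finset.sum_congr rfl fun j _ => ?_
        rw [h1 j, det_mul]
    _ = (C.det * B.trace) * Cᵀ.det := by rw [← Finset.sum_mul, h2]
    _ = (C * Cᵀ).det * B.trace := by rw [det_mul]; ring

open scoped RealInnerProductSpace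
open scoped Matrix

theorem stmt_8 {H : Type*} [NormedAddCommGroup H] [InnerProductSpace ℝ H]
    (A : H →ₗ[ℝ] H) (m : ℕ) (hm : 1 ≤ m)
    (ξ : Fin m → H) (hξ : LinearIndependent ℝ ξ)
    (b : Fin m → H) (hb : Orthonormal ℝ b)
    (hspan : Submodule.span ℝ (Set.range b) = Submodule.span ℝ (Set.range ξ)) :
    (∑ j : Fin m,
        Matrix.det (Matrix.updateRow (Matrix.of fun i k : Fin m => ⟪ξ i, ξ k⟫) j
          (fun k => ⟪A (ξ j), ξ k⟫)))
      = Matrix.det (Matrix.of fun i k : Fin m => ⟪ξ i, ξ k⟫)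
        * ∑ i : Fin m, ⟪A (b i), b i⟫ := by
  set C : Matrix (Fin m) (Fin m) ℝ := Matrix.of fun i q => ⟪ξ i, b q⟫ with hC
  set B : Matrix (Fin m) (Fin m) ℝ := Matrix.of fun p l => ⟪A (b p), b l⟫ with hB
  -- expansion of ξ in the orthonormal family b
  have hxi : ∀ i, ξ i = ∑ q, C i q • b q := by
    intro i
    have hmem : ξ i ∈ Submodule.span ℝ (Set.range b) := by
      rw [hspan]
      exact Submodule.subset_span (Set.mem_range_self i)
    obtain ⟨a, ha⟩ := (Submodule.mem_span_range_iff_exists_fun ℝ).mp hmem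
    have hcoef : ∀ q, C i q = a q := by
      intro q
      have : ⟪ξ i, b q⟫ = a q := by
        rw [← ha, real_inner_comm]
        exact hb.inner_right_fintype a q
      simpa [hC] using this
    rw [← ha]
    exact Finset.sum_congr rfl fun q _ => by rw [hcoef q]
  have hbq : ∀ i q, ⟪ξ i, b q⟫ = C i q := fun i q => rfl
  have hG : ∀ i k, ⟪ξ i, ξ k⟫ = (C * Cᵀ) i k := by
    intro i k
    rw [Matrix.mul_apply]
    conv_lhs => rw [hxi k]
    rw [inner_sum]
    refine Finset.sum_congr rfl fun q _ => ?_
    rw [real_inner_smul_right, Matrix.transpose_apply, mul_comm]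
    rfl
  have hAb : ∀ p k, ⟪A (b p), ξ k⟫ = ∑ l, B p l * C k l := by
    intro p k
    conv_lhs => rw [hxi k]
    rw [inner_sum]
    refine Finset.sum_congr rfl fun l _ => ?_
    rw [real_inner_smul_right, mul_comm]
    rfl
  have hA : ∀ j k, ⟪A (ξ j), ξ k⟫ = (C * B * Cᵀ) j k := by
    intro j k
    have : A (ξ j) = ∑ p, C j p • A (b p) := by
      rw [hxi j, map_sum]
      simp
    rw [this, sum_inner]
    rw [Matrix.mul_apply]
    rw [Finset.sum_congr rfl fun p _ => by
      rw [real_inner_smul_left, hAb p k, Finset.mul_sum]]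
    rw [Finset.sum_comm]
    refine Finset.sum_congr rfl fun l _ => ?_
    rw [Matrix.mul_apply, Finset.sum_mul, Matrix.transpose_apply]
    exact Finset.sum_congr rfl fun p _ => by ring
  have hGmat : (Matrix.of fun i k : Fin m => ⟪ξ i, ξ k⟫) = C * Cᵀ := by
    ext i k; exact hG i k
  have hrow : ∀ j, (fun k => ⟪A (ξ j), ξ k⟫) = (C * B * Cᵀ) j := by
    intro j; funext k; exact hA j k
  rw [hGmat]
  calc ∑ j : Fin m, ((C * Cᵀ).updateRow j (fun k => ⟪A (ξ j), ξ k⟫)).det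
      = ∑ j : Fin m, ((C * Cᵀ).updateRow j ((C * B * Cᵀ) j)).det := by
        refine Finset.sum_congr rfl fun j _ => ?_
        rw [hrow j]
    _ = (C * Cᵀ).det * B.trace := aux_matrix_identity C B
    _ = (C * Cᵀ).det * ∑ i : Fin m, ⟪A (b i), b i⟫ := by
        rfl
end

section
/- Let H be a real Hilbert space, T > 0, and A : ℝ → B(H) a family of bounded linear operators on H, continuous in the operator norm. Let m ≥ 1 and let u_1,…,u_m : ℝ → H be such that for every t ∈ [0,T] each u_i has derivative u_i'(t) = A(t)(u_i(t)) (one-sided at the endpoints), and u_1(t),…,u_m(t) are linearly independent for every t ∈ [0,T]. Let G(t) be the m×m Gram matrix with entries ⟪u_i(t), u_j(t)⟫ and K(t) the m×m matrix with entries ⟪u_i(t), A(t)(u_j(t))⟫. Then for all t ∈ [0,T]: det G(t) = det G(0) · exp( 2 ∫_0^t trace( G(s)⁻¹ · K(s) ) ds ). -/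
open Set
open scoped RealInnerProductSpace
open scoped Matrix

theorem det_deriv_aux {n : ℕ} {M : ℝ → Matrix (Fin n) (Fin n) ℝ} {M' : Matrix (Fin n) (Fin n) ℝ}
    {s : Set ℝ} {x : ℝ}
    (h : ∀ i j, HasDerivWithinAt (fun t => M t i j) (M' i j) s x) :
    HasDerivWithinAt (fun t => (M t).det) (Matrix.trace ((M x).adjugate * M')) s x := by
  have key : ∀ σ : Equiv.Perm (Fin n), HasDerivWithinAt (fun t => ∏ i, M t (σ i) i)
      (∑ i, (∏ j ∈ Finset.univ.erase i, M x (σ j) j) • M' (σ i) i) s x := fun σ =>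
    HasDerivWithinAt.fun_finsetProd fun i _ => h (σ i) i
  have hder : HasDerivWithinAt (fun t => (M t).det)
      (∑ σ : Equiv.Perm (Fin n), ((Equiv.Perm.sign σ : ℤ) : ℝ) *
        ∑ i, (∏ j ∈ Finset.univ.erase i, M x (σ j) j) • M' (σ i) i) s x := by
    simp_rw [Matrix.det_apply']
    exact HasDerivWithinAt.fun_sum fun σ _ => (key σ).const_mul _
  convert hder using 1
  have hcol : ∀ i : Fin n,
      ∑ σ : Equiv.Perm (Fin n), ((Equiv.Perm.sign σ : ℤ) : ℝ) *
        ((∏ j ∈ Finset.univ.erase i, M x (σ j) j) * M' (σ i) i)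
      = ((M x).updateCol i fun k => M' k i).det := by
    intro i
    rw [Matrix.det_apply']
    refine Finset.sum_congr rfl fun σ _ => ?_
    congr 1
    rw [← Finset.prod_erase_mul _ _ (Finset.mem_univ i)]
    congr 1
    · exact Finset.prod_congr rfl fun j hj =>
        (Matrix.updateCol_ne (Finset.ne_of_mem_erase hj)).symm
    · simp
  calc Matrix.trace ((M x).adjugate * M')
      = ∑ i, ((M x).updateCol i fun k => M' k i).det := by
        simp only [← Matrix.cramer_apply, Matrix.cramer_eq_adjugate_mulVec]
        simp [Matrix.trace, Matrix.diag, Matrix.mul_apply, Matrix.mulVec, dotProduct]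
    _ = ∑ σ : Equiv.Perm (Fin n), ((Equiv.Perm.sign σ : ℤ) : ℝ) *
        ∑ i, (∏ j ∈ Finset.univ.erase i, M x (σ j) j) • M' (σ i) i := by
        simp_rw [← hcol, smul_eq_mul, Finset.mul_sum]
        rw [Finset.sum_comm]

theorem liouville_aux {m : ℕ} (T : ℝ) (hT : 0 < T)
    (G K : ℝ → Matrix (Fin m) (Fin m) ℝ)
    (hGcont : ContinuousOn G (Icc 0 T)) (hKcont : ContinuousOn K (Icc 0 T))
    (hGsymm : ∀ t ∈ Icc (0 : ℝ) T, (G t)ᵀ = G t)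
    (hGdet : ∀ t ∈ Icc (0 : ℝ) T, (G t).det ≠ 0)
    (hG' : ∀ t ∈ Icc (0 : ℝ) T, ∀ i j,
      HasDerivWithinAt (fun s => G s i j) (K t i j + K t j i) (Icc (0 : ℝ) T) t) :
    ∀ t ∈ Icc (0 : ℝ) T, (G t).det
      = (G 0).det * Real.exp (2 * ∫ s in (0 : ℝ)..t, Matrix.trace ((G s)⁻¹ * K s)) := by
  set g : ℝ → ℝ := fun s => Matrix.trace ((G s)⁻¹ * K s) with hg
  -- continuity of g on Icc
  have hg_eq : ∀ s, g s = ((G s).det)⁻¹ * Matrix.trace ((G s).adjugate * K s) := by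
    intro s
    rw [hg]
    simp only [Matrix.inv_def, Ring.inverse_eq_inv, Matrix.smul_mul, Matrix.trace_smul,
      smul_eq_mul]
  have hg_cont : ContinuousOn g (Icc 0 T) := by
    have h1 : ContinuousOn (fun s => (G s).det) (Icc 0 T) :=
      (continuous_id.matrix_det).comp_continuousOn hGcont
    have hadjc : ContinuousOn (fun s => (G s).adjugate) (Icc 0 T) :=
      (continuous_id.matrix_adjugate).comp_continuousOn hGcont
    have hc : Continuous (fun p : Matrix (Fin m) (Fin m) ℝ × Matrix (Fin m) (Fin m) ℝ =>
        p.1 * p.2) := continuous_fst.matrix_mul continuous_snd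
    have hmulc : ContinuousOn (fun s => (G s).adjugate * K s) (Icc 0 T) :=
      hc.comp_continuousOn (f := fun s => ((G s).adjugate, K s)) (hadjc.prodMk hKcont)
    have h2 : ContinuousOn (fun s => Matrix.trace ((G s).adjugate * K s)) (Icc 0 T) :=
      (continuous_id.matrix_trace).comp_continuousOn hmulc
    have := ((h1.inv₀ hGdet).mul h2)
    exact this.congr fun s hs => hg_eq s
  -- derivative of det G
  have hf' : ∀ t ∈ Icc (0 : ℝ) T,
      HasDerivWithinAt (fun s => (G s).det) (2 * g t * (G t).det) (Icc (0 : ℝ) T) t := by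
    intro t ht
    have hdd := det_deriv_aux (M' := K t + (K t)ᵀ) (s := Icc (0 : ℝ) T) (x := t)
      (fun i j => by simpa using hG' t ht i j)
    convert hdd using 1
    have hadj : (G t).adjugate = (G t).det • (G t)⁻¹ := by
      rw [Matrix.inv_def, Ring.inverse_eq_inv, smul_smul, mul_inv_cancel₀ (hGdet t ht), one_smul]
    have htr : Matrix.trace ((G t)⁻¹ * (K t)ᵀ) = Matrix.trace ((G t)⁻¹ * K t) := by
      rw [← Matrix.trace_transpose ((G t)⁻¹ * (K t)ᵀ), Matrix.transpose_mul,
        Matrix.transpose_transpose, Matrix.transpose_nonsing_inv, hGsymm t ht,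
        Matrix.trace_mul_comm]
    rw [hadj, Matrix.smul_mul, Matrix.trace_smul, smul_eq_mul, Matrix.mul_add,
      Matrix.trace_add, htr]
    rw [hg]
    ring
  -- FTC
  set F : ℝ → ℝ := fun t => ∫ s in (0 : ℝ)..t, g s with hF
  have hF' : ∀ t ∈ Icc (0 : ℝ) T, HasDerivWithinAt F (g t) (Icc (0 : ℝ) T) t := by
    intro t ht
    haveI : Fact (t ∈ Icc (0 : ℝ) T) := ⟨ht⟩
    have hint : IntervalIntegrable g MeasureTheory.volume 0 t := by
      refine (hg_cont.mono ?_).intervalIntegrable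
      rw [uIcc_of_le ht.1]
      exact Icc_subset_Icc le_rfl ht.2
    exact intervalIntegral.integral_hasDerivWithinAt_right hint
      (hg_cont.stronglyMeasurableAtFilter_nhdsWithin measurableSet_Icc t) (hg_cont t ht)
  -- h is constant
  set h : ℝ → ℝ := fun t => (G t).det * Real.exp (-(2 * F t)) with hh
  have hh' : ∀ t ∈ Icc (0 : ℝ) T, HasDerivWithinAt h 0 (Icc (0 : ℝ) T) t := by
    intro t ht
    have he : HasDerivWithinAt (fun s => Real.exp (-(2 * F s)))
        (Real.exp (-(2 * F t)) * -(2 * g t)) (Icc (0 : ℝ) T) t :=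
      (((hF' t ht).const_mul 2).neg).exp
    have : HasDerivWithinAt h _ (Icc (0 : ℝ) T) t := (hf' t ht).mul he
    convert this using 1
    ring
  have hconst := constant_of_has_deriv_right_zero
    (f := h) (a := (0:ℝ)) (b := T)
    (fun t ht => ((hh' t ht).continuousWithinAt))
    (fun t ht => (hh' t (mem_Icc_of_Ico ht)).mono_of_mem_nhdsWithin
      (Icc_mem_nhdsGE_of_mem ht))
  intro t ht
  have h0 : h 0 = (G 0).det := by
    simp [hh, hF, intervalIntegral.integral_same]
  have key : (G t).det * Real.exp (-(2 * F t)) = (G 0).det := by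
    have := hconst t ht
    rw [h0] at this
    simpa [hh] using this
  have : (G t).det = (G 0).det * Real.exp (2 * F t) := by
    rw [← key, Real.exp_neg]
    field_simp
  exact this

theorem stmt_9 {H : Type*} [NormedAddCommGroup H] [InnerProductSpace ℝ H] [CompleteSpace H]
    (T : ℝ) (hT : 0 < T)
    (A : ℝ → H →L[ℝ] H) (hA : Continuous A)
    (m : ℕ) (hm : 1 ≤ m)
    (u : Fin m → ℝ → H)
    (hderiv : ∀ i : Fin m, ∀ t ∈ Icc (0 : ℝ) T,
      HasDerivWithinAt (u i) (A t (u i t)) (Icc (0 : ℝ) T) t)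
    (hli : ∀ t ∈ Icc (0 : ℝ) T, LinearIndependent ℝ (fun i : Fin m => u i t)) :
    ∀ t ∈ Icc (0 : ℝ) T,
      (Matrix.of fun i j : Fin m => ⟪u i t, u j t⟫).det
        = (Matrix.of fun i j : Fin m => ⟪u i 0, u j 0⟫).det
          * Real.exp (2 * ∫ s in (0 : ℝ)..t,
              Matrix.trace ((Matrix.of fun i j : Fin m => ⟪u i s, u j s⟫)⁻¹
                * Matrix.of fun i j : Fin m => ⟪u i s, A s (u j s)⟫)) := by
  have hu_cont : ∀ i : Fin m, ContinuousOn (u i) (Icc (0 : ℝ) T) := fun i t ht =>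
    (hderiv i t ht).continuousWithinAt
  have hAu_cont : ∀ j : Fin m, ContinuousOn (fun s => A s (u j s)) (Icc (0 : ℝ) T) :=
    fun j => (hA.continuousOn).clm_apply (hu_cont j)
  have hGcont : ContinuousOn (fun s => Matrix.of fun i j : Fin m => ⟪u i s, u j s⟫)
      (Icc (0 : ℝ) T) := by
    apply continuousOn_pi.2
    intro i
    apply continuousOn_pi.2
    intro j
    exact (hu_cont i).inner (hu_cont j)
  have hKcont : ContinuousOn (fun s => Matrix.of fun i j : Fin m => ⟪u i s, A s (u j s)⟫)
      (Icc (0 : ℝ) T) := by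
    apply continuousOn_pi.2
    intro i
    apply continuousOn_pi.2
    intro j
    exact (hu_cont i).inner (hAu_cont j)
  have hGsymm : ∀ t ∈ Icc (0 : ℝ) T,
      (Matrix.of fun i j : Fin m => ⟪u i t, u j t⟫)ᵀ
        = Matrix.of fun i j : Fin m => ⟪u i t, u j t⟫ := by
    intro t _
    ext i j
    exact real_inner_comm _ _
  have hGdet : ∀ t ∈ Icc (0 : ℝ) T,
      (Matrix.of fun i j : Fin m => ⟪u i t, u j t⟫).det ≠ 0 := by
    intro t ht hdet0
    obtain ⟨v, hv0, hveq⟩ := Matrix.exists_mulVec_eq_zero_iff.mpr hdet0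
    have hw : (∑ i, v i • u i t) = 0 := by
      rw [← inner_self_eq_zero (𝕜 := ℝ)]
      have : ⟪∑ i, v i • u i t, ∑ j, v j • u j t⟫
          = ∑ i, v i * ((Matrix.of fun i j : Fin m => ⟪u i t, u j t⟫) *ᵥ v) i := by
        simp only [sum_inner, inner_sum, real_inner_smul_left, real_inner_smul_right,
          Matrix.mulVec, dotProduct, Matrix.of_apply, Finset.mul_sum]
        refine Finset.sum_congr rfl fun i _ => Finset.sum_congr rfl fun j _ => by rw [real_inner_comm (u j t) (u i t)]; ring
      rw [this, hveq]
      simp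
    have := Fintype.linearIndependent_iff.mp (hli t ht) v hw
    exact hv0 (funext this)
  have hG' : ∀ t ∈ Icc (0 : ℝ) T, ∀ i j : Fin m,
      HasDerivWithinAt (fun s => (Matrix.of fun i j : Fin m => ⟪u i s, u j s⟫ :
          Matrix (Fin m) (Fin m) ℝ) i j)
        ((Matrix.of fun i j : Fin m => ⟪u i t, A t (u j t)⟫ : Matrix (Fin m) (Fin m) ℝ) i j
          + (Matrix.of fun i j : Fin m => ⟪u i t, A t (u j t)⟫ : Matrix (Fin m) (Fin m) ℝ) j i)
        (Icc (0 : ℝ) T) t := by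
    intro t ht i j
    have := HasDerivWithinAt.inner ℝ (hderiv i t ht) (hderiv j t ht)
    have hcomm : ⟪A t (u i t), u j t⟫ = ⟪u j t, A t (u i t)⟫ := real_inner_comm _ _
    simp only [Matrix.of_apply]
    rw [← hcomm]
    exact this
  exact liouville_aux T hT _ _ hGcont hKcont hGsymm hGdet hG'
end

section
/- Let H be a real Hilbert space and S : H → H a bounded self-adjoint operator. Let m ≥ 1, let e_1,…,e_m ∈ H be an orthonormal family with S e_j = α_j e_j where α_1 ≥ α_2 ≥ … ≥ α_m, and suppose that ⟪S x, x⟫ ≤ α_m ‖x‖² for every x in the orthogonal complement of span{e_1,…,e_m}. Then sup{ ∑_{j=1}^m ⟪S f_j, f_j⟫ : (f_1,…,f_m) an orthonormal family in H } = α_1 + … + α_m, and this supremum is attained at (e_1,…,e_m); that is, the sum of the first m trace numbers of S equals the sum of its m largest eigenvalues. -/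
open scoped RealInnerProductSpace

theorem stmt_10 {H : Type*} [NormedAddCommGroup H] [InnerProductSpace ℝ H] [CompleteSpace H]
    (S : H →L[ℝ] H) (hS : IsSelfAdjoint S)
    (m : ℕ) (hm : 0 < m)
    (e : Fin m → H) (he : Orthonormal ℝ e)
    (α : Fin m → ℝ) (hα : Antitone α)
    (heig : ∀ j : Fin m, S (e j) = α j • e j)
    (hcompl : ∀ x ∈ (Submodule.span ℝ (Set.range e))ᗮ,
      ⟪S x, x⟫ ≤ α ⟨m - 1, by omega⟩ * ‖x‖ ^ 2) :
    IsGreatest {x : ℝ | ∃ f : Fin m → H, Orthonormal ℝ f ∧ x = ∑ j : Fin m, ⟪S (f j), f j⟫}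
        (∑ j : Fin m, α j)
      ∧ (∑ j : Fin m, ⟪S (e j), e j⟫) = ∑ j : Fin m, α j := by
  set αm : ℝ := α ⟨m - 1, by omega⟩ with hαm
  have hsymm : ∀ x y : H, ⟪S x, y⟫ = ⟪x, S y⟫ :=
    (ContinuousLinearMap.isSelfAdjoint_iff_isSymmetric.mp hS)
  have he_ite : ∀ i j : Fin m, ⟪e i, e j⟫ = if i = j then (1:ℝ) else 0 :=
    orthonormal_iff_ite.mp he
  have heq : (∑ j : Fin m, ⟪S (e j), e j⟫) = ∑ j : Fin m, α j := by
    refine Finset.sum_congr rfl fun j _ => ?_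
    rw [heig j, real_inner_smul_left]
    have := he_ite j j
    rw [if_pos rfl] at this
    rw [this, mul_one]
  refine ⟨⟨⟨e, he, heq.symm⟩, ?_⟩, heq⟩
  rintro x ⟨f, hf, rfl⟩
  set c : Fin m → Fin m → ℝ := fun i j => ⟪f i, e j⟫ with hc
  set p : Fin m → H := fun i => ∑ j, c i j • e j with hp
  set q : Fin m → H := fun i => f i - p i with hq
  set E : Submodule ℝ H := Submodule.span ℝ (Set.range e) with hE
  have hf_ite : ∀ i j : Fin m, ⟪f i, f j⟫ = if i = j then (1:ℝ) else 0 :=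
    orthonormal_iff_ite.mp hf
  have hpE : ∀ i, p i ∈ E := fun i =>
    Submodule.sum_mem _ fun j _ => Submodule.smul_mem _ _
      (Submodule.subset_span ⟨j, rfl⟩)
  have hqE : ∀ i, q i ∈ Eᗮ := by
    intro i
    rw [Submodule.mem_orthogonal]
    intro u hu
    induction hu using Submodule.span_induction with
    | mem u hu =>
      obtain ⟨k, rfl⟩ := hu
      have h1 : ⟪e k, p i⟫ = c i k := by
        rw [hp]
        simp only [inner_sum, real_inner_smul_right, he_ite]
        simp [Finset.sum_ite_eq]
      have h2 : ⟪e k, f i⟫ = c i k := real_inner_comm _ _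
      simp [hq, inner_sub_right, h1, h2]
    | zero => simp
    | add u v _ _ h1 h2 => simp [inner_add_left, h1, h2]
    | smul a u _ h1 => simp [inner_smul_left, h1]
  have hSp : ∀ i, S (p i) = ∑ j, (α j * c i j) • e j := by
    intro i
    rw [hp, map_sum]
    refine Finset.sum_congr rfl fun j _ => ?_
    rw [map_smul, heig j, smul_smul, mul_comm]
  have hSpE : ∀ i, S (p i) ∈ E := by
    intro i
    rw [hSp]
    exact Submodule.sum_mem _ fun j _ => Submodule.smul_mem _ _
      (Submodule.subset_span ⟨j, rfl⟩)
  have hSpp : ∀ i, ⟪S (p i), p i⟫ = ∑ j, α j * c i j ^ 2 := by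
    intro i
    rw [hSp, hp]
    rw [sum_inner]
    refine Finset.sum_congr rfl fun j _ => ?_
    rw [real_inner_smul_left, inner_sum]
    simp only [real_inner_smul_right, he_ite, mul_ite, mul_one, mul_zero]
    rw [Finset.sum_ite_eq]
    simp [pow_two]
    ring
  have hdecomp : ∀ i, ⟪S (f i), f i⟫ = ⟪S (p i), p i⟫ + ⟪S (q i), q i⟫ := by
    intro i
    have hfi : f i = p i + q i := by simp [hq]
    have h1 : ⟪S (p i), q i⟫ = 0 :=
      Submodule.inner_right_of_mem_orthogonal (hSpE i) (hqE i)
    have h2 : ⟪S (q i), p i⟫ = 0 := by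
      rw [hsymm, real_inner_comm]
      exact Submodule.inner_right_of_mem_orthogonal (hSpE i) (hqE i)
    rw [hfi, map_add]
    rw [inner_add_left, inner_add_right, inner_add_right, h1, h2]
    ring
  have hnormp : ∀ i, ‖p i‖ ^ 2 = ∑ j, c i j ^ 2 := by
    intro i
    rw [← real_inner_self_eq_norm_sq, hp, sum_inner]
    refine Finset.sum_congr rfl fun j _ => ?_
    rw [real_inner_smul_left, inner_sum]
    simp only [real_inner_smul_right, he_ite, mul_ite, mul_one, mul_zero]
    rw [Finset.sum_ite_eq]
    simp [pow_two]
  have hnormq : ∀ i, ‖q i‖ ^ 2 = 1 - ∑ j, c i j ^ 2 := by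
    intro i
    have hpq : ⟪p i, q i⟫ = 0 :=
      Submodule.inner_right_of_mem_orthogonal (hpE i) (hqE i)
    have hfi : ‖f i‖ ^ 2 = ‖p i‖ ^ 2 + ‖q i‖ ^ 2 := by
      have : f i = p i + q i := by simp [hq]
      rw [this, norm_add_sq_real, hpq]
      ring
    have hf1 : ‖f i‖ = 1 := hf.1 i
    rw [hf1] at hfi
    rw [hnormp i] at hfi
    nlinarith [hfi]
  have hαm_le : ∀ j : Fin m, αm ≤ α j := by
    intro j
    have hj : (j : ℕ) ≤ m - 1 := by have := j.isLt; omega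
    exact hα (by rw [Fin.le_def]; simpa using hj)
  have hbessel : ∀ j : Fin m, ∑ i, c i j ^ 2 ≤ 1 := by
    intro j
    have := hf.sum_inner_products_le (e j) (s := Finset.univ)
    have h1 : ‖e j‖ = 1 := he.1 j
    calc ∑ i, c i j ^ 2 = ∑ i, ‖⟪f i, e j⟫‖ ^ 2 := by
          refine Finset.sum_congr rfl fun i _ => ?_
          rw [Real.norm_eq_abs, sq_abs]
      _ ≤ ‖e j‖ ^ 2 := this
      _ = 1 := by rw [h1]; norm_num
  have hstep : ∀ i, ⟪S (f i), f i⟫ ≤ (∑ j, α j * c i j ^ 2) + αm * (1 - ∑ j, c i j ^ 2) := by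
    intro i
    rw [hdecomp i, hSpp i]
    have := hcompl (q i) (hqE i)
    rw [hnormq i] at this
    linarith
  set t : Fin m → ℝ := fun j => ∑ i, c i j ^ 2 with ht
  calc ∑ i, ⟪S (f i), f i⟫
      ≤ ∑ i, ((∑ j, α j * c i j ^ 2) + αm * (1 - ∑ j, c i j ^ 2)) :=
        Finset.sum_le_sum fun i _ => hstep i
    _ = ∑ j, (α j * t j + αm * (1 - t j)) := by
        rw [Finset.sum_add_distrib, Finset.sum_add_distrib, Finset.sum_comm]
        congr 1
        · exact Finset.sum_congr rfl fun j _ => by rw [ht, Finset.mul_sum]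
        · simp only [mul_sub, mul_one, Finset.sum_sub_distrib, ht, Finset.mul_sum]
          rw [Finset.sum_comm (f := fun i j => αm * c i j ^ 2)]
    _ ≤ ∑ j, α j := by
        refine Finset.sum_le_sum fun j _ => ?_
        have h1 : t j ≤ 1 := hbessel j
        have h2 : 0 ≤ t j := Finset.sum_nonneg fun i _ => sq_nonneg _
        have h3 : αm ≤ α j := hαm_le j
        nlinarith
end

section
/- Let (Q,ϑ) be a semiflow on a metric space Q, let f = {f^t}_{t≥0} be a proper subadditive family over (Q,ϑ), and let A ⊆ Q be a compact set with ϑ^t(A) = A for all t ≥ 0 which attracts Q, meaning: for every ε > 0 there exists T ≥ 0 such that infDist(ϑ^t(q), A) < ε for all t ≥ T and all q ∈ Q. Then ⨅_{t>0} ⨆_{q∈Q} (1/t)·f^t(q) = ⨅_{t>0} ⨆_{q∈A} (1/t)·f^t(q), both sides computed in the extended reals EReal, where (1/t)· denotes multiplication by the positive real number 1/t. -/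
open Set Filter

private lemma ereal_one_div_mul (t : ℝ) (x : EReal) :
    ((1 / t : ℝ) : EReal) * x = x / (t : EReal) := by
  rw [EReal.div_eq_inv_mul, one_div, EReal.coe_inv]

theorem stmt_11 {Q : Type*} [MetricSpace Q]
    (ϑ : ℝ → Q → Q)
    (hϑ0 : ∀ q, ϑ 0 q = q)
    (hϑadd : ∀ t s : ℝ, 0 ≤ t → 0 ≤ s → ∀ q, ϑ (t + s) q = ϑ t (ϑ s q))
    (hϑc : ContinuousOn (fun p : ℝ × Q => ϑ p.1 p.2) {p : ℝ × Q | 0 ≤ p.1})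
    (f : ℝ → Q → EReal)
    (husc : ∀ t : ℝ, 0 ≤ t → UpperSemicontinuous (f t))
    (hnotTop : ∀ t : ℝ, 0 ≤ t → ∀ q : Q, f t q ≠ ⊤)
    (hsub : ∀ t s : ℝ, 0 ≤ t → 0 ≤ s → ∀ q : Q, f (t + s) q ≤ f t (ϑ s q) + f s q)
    (hbdd : ∃ C : ℝ, ∀ t ∈ Icc (0 : ℝ) 1, ∀ q : Q, f t q ≤ (C : EReal))
    (A : Set Q) (hAcomp : IsCompact A)
    (hAinv : ∀ t : ℝ, 0 ≤ t → ϑ t '' A = A)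
    (hAattr : ∀ ε : ℝ, 0 < ε → ∃ T : ℝ, 0 ≤ T ∧ ∀ t : ℝ, T ≤ t → ∀ q : Q,
      ∃ a ∈ A, dist (ϑ t q) a < ε) :
    (⨅ t : {t : ℝ // 0 < t}, ⨆ q : Q, ((1 / t.1 : ℝ) : EReal) * f t.1 q)
      = ⨅ t : {t : ℝ // 0 < t}, ⨆ q : A, ((1 / t.1 : ℝ) : EReal) * f t.1 (q : Q) := by
  classical
  obtain ⟨C, hC⟩ := hbdd
  have hCmax : C ≤ max C 0 := le_max_left _ _
  have hmax0 : (0:ℝ) ≤ max C 0 := le_max_right _ _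
  -- uniform a priori bound on every time interval
  have hglob : ∀ n : ℕ, ∀ t : ℝ, 0 ≤ t → t ≤ (n : ℝ) + 1 → ∀ q : Q,
      f t q ≤ (((n : ℝ) * max C 0 + C : ℝ) : EReal) := by
    intro n
    induction n with
    | zero =>
      intro t h0 h1 q
      have h1' : t ≤ 1 := by push_cast at h1; linarith
      simpa using hC t ⟨h0, h1'⟩ q
    | succ n ih =>
      intro t h0 h1 q
      by_cases ht : t ≤ (n : ℝ) + 1
      · refine (ih t h0 ht q).trans ?_
        apply EReal.coe_le_coe_iff.mpr
        push_cast
        nlinarith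
      · push_neg at ht
        have h2 : f t q ≤ f (t - 1) (ϑ 1 q) + f 1 q := by
          have h3 := hsub (t - 1) 1 (by linarith) zero_le_one q
          have h4 : t - 1 + 1 = t := by ring
          rwa [h4] at h3
        have h5 : t - 1 ≤ (n : ℝ) + 1 := by push_cast at h1; linarith
        calc f t q ≤ f (t - 1) (ϑ 1 q) + f 1 q := h2
          _ ≤ (((n : ℝ) * max C 0 + C : ℝ) : EReal) + ((max C 0 : ℝ) : EReal) :=
              add_le_add (ih (t - 1) (by linarith) h5 _)
                ((hC 1 ⟨zero_le_one, le_refl 1⟩ q).trans (EReal.coe_le_coe_iff.mpr hCmax))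
          _ = ((((n : ℕ) + 1 : ℕ) * max C 0 + C : ℝ) : EReal) := by
              rw [← EReal.coe_add]; congr 1; push_cast; ring
  apply le_antisymm
  · -- hard direction
    rcases isEmpty_or_nonempty Q with hQ | hQ
    · calc (⨅ t : {t : ℝ // 0 < t}, ⨆ q : Q, ((1 / t.1 : ℝ) : EReal) * f t.1 q)
          ≤ ⨆ q : Q, ((1 / (1:ℝ)) : EReal) * f 1 q :=
            iInf_le (fun t : {t : ℝ // 0 < t} => ⨆ q : Q, ((1 / t.1 : ℝ) : EReal) * f t.1 q)
              ⟨1, one_pos⟩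
        _ = ⊥ := by simp
        _ ≤ _ := bot_le
    · by_contra hcon
      push_neg at hcon
      obtain ⟨c', hc'l, hc'r⟩ := EReal.exists_between_coe_real hcon
      obtain ⟨c, hcl, hcr⟩ := EReal.exists_between_coe_real hc'l
      have hcc' : c < c' := by exact_mod_cast hcr
      obtain ⟨u, hu⟩ := iInf_lt_iff.mp hcl
      obtain ⟨u0, hu0⟩ := u
      have hu0' : (0 : EReal) < (u0 : EReal) := by exact_mod_cast hu0
      -- every point of A satisfies f u0 a < u0 * c
      have hAU : ∀ a ∈ A, f u0 a < ((u0 * c : ℝ) : EReal) := by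
        intro a ha
        have h1 : ((1 / u0 : ℝ) : EReal) * f u0 a < (c : EReal) :=
          lt_of_le_of_lt
            (le_iSup (fun q : A => ((1 / u0 : ℝ) : EReal) * f u0 (q : Q)) ⟨a, ha⟩) hu
        rw [ereal_one_div_mul] at h1
        have h2 : ((u0 * c : ℝ) : EReal) / (u0 : EReal) = (c : EReal) := by
          rw [EReal.div_eq_inv_mul, ← EReal.coe_inv, ← EReal.coe_mul]
          congr 1
          field_simp
        have h3 : f u0 a / (u0 : EReal) < ((u0 * c : ℝ) : EReal) / (u0 : EReal) := by
          rw [h2]; exact h1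
        exact (EReal.strictMono_div_right_of_pos hu0' (EReal.coe_ne_top u0)).lt_iff_lt.mp h3
      -- the open set U
      have hUopen : IsOpen (f u0 ⁻¹' Iio ((u0 * c : ℝ) : EReal)) :=
        (husc u0 hu0.le).isOpen_preimage _
      have hAsub : A ⊆ f u0 ⁻¹' Iio ((u0 * c : ℝ) : EReal) := fun a ha => hAU a ha
      obtain ⟨δ, hδ, hth⟩ := hAcomp.exists_thickening_subset_open hUopen hAsub
      obtain ⟨T, hT0, hTat⟩ := hAattr δ hδ
      have hUt : ∀ t : ℝ, T ≤ t → ∀ q : Q, f u0 (ϑ t q) ≤ ((u0 * c : ℝ) : EReal) := by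
        intro t ht q
        obtain ⟨a, ha, hd⟩ := hTat t ht q
        have hmem : ϑ t q ∈ Metric.thickening δ A :=
          Metric.mem_thickening_iff.mpr ⟨a, ha, hd⟩
        exact le_of_lt (hth hmem)
      -- bound on f T
      set B : ℝ := (⌈T⌉₊ : ℝ) * max C 0 + C with hBdef
      have hB : ∀ q : Q, f T q ≤ (B : EReal) := by
        intro q
        exact hglob ⌈T⌉₊ T hT0 ((Nat.le_ceil T).trans (by linarith)) q
      -- iteration
      have hiter : ∀ n : ℕ, ∀ q : Q,
          f (T + (n : ℝ) * u0) q ≤ (((n : ℝ) * (u0 * c) + B : ℝ) : EReal) := by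
        intro n
        induction n with
        | zero => intro q; simpa using hB q
        | succ n ih =>
          intro q
          have hnn : (0:ℝ) ≤ T + (n : ℝ) * u0 :=
            add_nonneg hT0 (mul_nonneg (Nat.cast_nonneg n) hu0.le)
          have heq : T + ((n + 1 : ℕ) : ℝ) * u0 = u0 + (T + (n : ℝ) * u0) := by
            push_cast; ring
          have h1 := hsub u0 (T + (n : ℝ) * u0) hu0.le hnn q
          calc f (T + ((n + 1 : ℕ) : ℝ) * u0) q
              = f (u0 + (T + (n : ℝ) * u0)) q := by rw [heq]
            _ ≤ f u0 (ϑ (T + (n : ℝ) * u0) q) + f (T + (n : ℝ) * u0) q := h1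
            _ ≤ ((u0 * c : ℝ) : EReal) + (((n : ℝ) * (u0 * c) + B : ℝ) : EReal) :=
                add_le_add
                  (hUt _ (le_add_of_nonneg_right (mul_nonneg (Nat.cast_nonneg n) hu0.le)) q)
                  (ih q)
            _ = ((((n + 1 : ℕ) : ℝ) * (u0 * c) + B : ℝ) : EReal) := by
                rw [← EReal.coe_add]; congr 1; push_cast; ring
      -- choose n large
      obtain ⟨m, hm⟩ := exists_nat_ge ((B - c' * T) / (u0 * (c' - c)))
      set n : ℕ := m + 1 with hndef
      have hn1 : (1:ℝ) ≤ (n : ℝ) := by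
        have : (0:ℝ) ≤ (m : ℝ) := Nat.cast_nonneg m
        push_cast [hndef]; linarith
      have hnm : ((B - c' * T) / (u0 * (c' - c))) ≤ (n : ℝ) := by
        have : (0:ℝ) ≤ (m : ℝ) := Nat.cast_nonneg m
        push_cast [hndef]; push_cast at hm; linarith
      have hd : (0:ℝ) < u0 * (c' - c) := mul_pos hu0 (by linarith)
      have h1 : B - c' * T ≤ (n : ℝ) * (u0 * (c' - c)) := by
        calc B - c' * T = ((B - c' * T) / (u0 * (c' - c))) * (u0 * (c' - c)) := by
              field_simp
              rw [mul_div_assoc, div_self (sub_ne_zero.mpr hcc'.ne'), mul_one]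
          _ ≤ (n : ℝ) * (u0 * (c' - c)) := mul_le_mul_of_nonneg_right hnm hd.le
      have hkey : (n : ℝ) * (u0 * c) + B ≤ c' * (T + (n : ℝ) * u0) := by nlinarith
      set tn : ℝ := T + (n : ℝ) * u0 with htndef
      have htn : 0 < tn := by nlinarith
      have hfinal : (⨅ t : {t : ℝ // 0 < t}, ⨆ q : Q, ((1 / t.1 : ℝ) : EReal) * f t.1 q)
          ≤ (c' : EReal) := by
        refine (iInf_le _ ⟨tn, htn⟩).trans (iSup_le fun q => ?_)
        rw [ereal_one_div_mul,
          EReal.div_le_iff_le_mul (by exact_mod_cast htn) (EReal.coe_ne_top tn)]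
        refine (hiter n q).trans ?_
        rw [← EReal.coe_mul]
        apply EReal.coe_le_coe_iff.mpr
        calc (n : ℝ) * (u0 * c) + B ≤ c' * (T + (n : ℝ) * u0) := hkey
          _ = tn * c' := by rw [htndef]; ring
      exact absurd hfinal hc'r.not_ge
  · exact iInf_mono fun t =>
      iSup_le fun a => le_iSup (fun q : Q => ((1 / t.1 : ℝ) : EReal) * f t.1 q) a.1
end

section
/- Let (Q,ϑ) be a semiflow on a metric space Q, let f = {f^t}_{t≥0} be a proper subadditive family over (Q,ϑ), and let A ⊆ Q be a compact set with ϑ^t(A) = A for all t ≥ 0 which attracts Q (for every ε > 0 there is T ≥ 0 with infDist(ϑ^t(q), A) < ε for all t ≥ T, q ∈ Q). Then the uniform growth exponent Λ(f) := ⨅_{t>0} ⨆_{q∈Q} (1/t)·f^t(q) (in EReal) satisfies Λ(f) = ⨆_{q∈Q} ⨅_{t>0} (1/t)·f^t(q), and moreover there exists q₀ ∈ A such that Λ(f) = ⨅_{t>0} (1/t)·f^t(q₀); in particular Λ(f) = max_{q∈A} ⨅_{t>0} (1/t)·f^t(q). -/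
open Set Filter


private lemma ereal_mul_le_coe {c r : ℝ} (hc : 0 < c) {x : EReal} (hx : x ≤ (r : EReal)) :
    ((c : ℝ) : EReal) * x ≤ ((c * r : ℝ) : EReal) := by
  induction x using EReal.rec with
  | bot =>
      rw [EReal.mul_bot_of_pos (by exact_mod_cast hc)]; exact bot_le
  | coe y =>
      rw [← EReal.coe_mul]
      exact EReal.coe_le_coe_iff.2 (mul_le_mul_of_nonneg_left (EReal.coe_le_coe_iff.1 hx) hc.le)
  | top => exact absurd hx (by simp)

private lemma ereal_add_le_coe {u v : ℝ} {a b : EReal} (ha : a ≤ (u : EReal)) (hb : b ≤ (v : EReal)) :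
    a + b ≤ ((u + v : ℝ) : EReal) := by
  rw [EReal.coe_add]; exact add_le_add ha hb

private lemma growth_bound {Q : Type*} (ϑ : ℝ → Q → Q) (f : ℝ → Q → EReal)
    (hsub : ∀ t s : ℝ, 0 ≤ t → 0 ≤ s → ∀ q : Q, f (t + s) q ≤ f t (ϑ s q) + f s q)
    (C : ℝ) (hC : ∀ t ∈ Icc (0 : ℝ) 1, ∀ q : Q, f t q ≤ (C : EReal)) :
    ∀ r : ℝ, 0 ≤ r → ∀ q : Q, f r q ≤ (((r + 1) * |C| : ℝ) : EReal) := by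
  have main : ∀ n : ℕ, ∀ r : ℝ, 0 ≤ r → r ≤ n + 1 → ∀ q : Q,
      f r q ≤ (((r + 1) * |C| : ℝ) : EReal) := by
    intro n
    induction n with
    | zero =>
        intro r hr0 hr1 q
        have hr1' : r ≤ 1 := by push_cast at hr1; linarith
        refine (hC r ⟨hr0, hr1'⟩ q).trans ?_
        have h : C ≤ (r + 1) * |C| := by nlinarith [le_abs_self C, abs_nonneg C]
        exact_mod_cast h
    | succ n ih =>
        intro r hr0 hrn q
        by_cases h : r ≤ n + 1
        · exact ih r hr0 h q
        · push_neg at h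
          have h1 : (0 : ℝ) ≤ r - 1 := by
            have : (0:ℝ) ≤ (n:ℝ) := Nat.cast_nonneg n
            linarith
          have hss := hsub (r - 1) 1 h1 zero_le_one q
          rw [sub_add_cancel] at hss
          refine hss.trans ?_
          have h2 := ih (r - 1) h1 (by push_cast at hrn ⊢; linarith) (ϑ 1 q)
          have h3 : f 1 q ≤ ((|C| : ℝ) : EReal) :=
            (hC 1 ⟨zero_le_one, le_rfl⟩ q).trans (by exact_mod_cast le_abs_self C)
          refine (ereal_add_le_coe h2 h3).trans ?_
          have : (r - 1 + 1) * |C| + |C| = (r + 1) * |C| := by ring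
          rw [this]
  intro r hr0 q
  obtain ⟨n, hn⟩ := exists_nat_ge r
  exact main n r hr0 (by linarith) q

private lemma key_exists {Q : Type*} [MetricSpace Q] [Nonempty Q]
    (ϑ : ℝ → Q → Q)
    (hϑadd : ∀ t s : ℝ, 0 ≤ t → 0 ≤ s → ∀ q, ϑ (t + s) q = ϑ t (ϑ s q))
    (f : ℝ → Q → EReal)
    (husc : ∀ t : ℝ, 0 ≤ t → UpperSemicontinuous (f t))
    (hnotTop : ∀ t : ℝ, 0 ≤ t → ∀ q : Q, f t q ≠ ⊤)
    (hsub : ∀ t s : ℝ, 0 ≤ t → 0 ≤ s → ∀ q : Q, f (t + s) q ≤ f t (ϑ s q) + f s q)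
    (hbdd : ∃ C : ℝ, ∀ t ∈ Icc (0 : ℝ) 1, ∀ q : Q, f t q ≤ (C : EReal))
    (A : Set Q) (hAcomp : IsCompact A)
    (hAattr : ∀ ε : ℝ, 0 < ε → ∃ T : ℝ, 0 ≤ T ∧ ∀ t : ℝ, T ≤ t → ∀ q : Q,
      ∃ a ∈ A, dist (ϑ t q) a < ε) :
    ∃ q₀ ∈ A, ∀ t : {t : ℝ // 0 < t},
      (⨅ s : {s : ℝ // 0 < s}, ⨆ q : Q, ((1 / s.1 : ℝ) : EReal) * f s.1 q)
        ≤ ((1 / t.1 : ℝ) : EReal) * f t.1 q₀ := by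
  classical
  obtain ⟨C, hC⟩ := hbdd
  set Λ : EReal := ⨅ s : {s : ℝ // 0 < s}, ⨆ q : Q, ((1 / s.1 : ℝ) : EReal) * f s.1 q with hΛdef
  have hAne : A.Nonempty := by
    obtain ⟨T, hT, h⟩ := hAattr 1 one_pos
    obtain ⟨a, ha, -⟩ := h T le_rfl (Classical.arbitrary Q)
    exact ⟨a, ha⟩
  by_cases hbot : Λ = ⊥
  · obtain ⟨a, ha⟩ := hAne
    exact ⟨a, ha, fun t => hbot ▸ bot_le⟩
  have hΛC : Λ ≤ (C : EReal) := by
    refine (iInf_le _ (⟨1, one_pos⟩ : {s : ℝ // 0 < s})).trans (iSup_le fun q => ?_)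
    have h1 : ((1 / (1:ℝ) : ℝ) : EReal) * f 1 q ≤ (C : EReal) := by
      norm_num
      exact hC 1 ⟨zero_le_one, le_rfl⟩ q
    exact h1
  have hΛtop : Λ ≠ ⊤ := by
    intro h
    rw [h] at hΛC
    exact absurd hΛC (by simp)
  have hΛreal : ((Λ.toReal : ℝ) : EReal) = Λ := EReal.coe_toReal hΛtop hbot
  by_contra hcon
  push_neg at hcon
  -- pointwise data on A
  have hgrow := growth_bound ϑ f hsub C hC
  have hpt : ∀ a, a ∈ A → ∃ t : ℝ, 0 < t ∧ ∃ ρ : ℝ, ρ < Λ.toReal ∧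
      f t a < ((t * ρ : ℝ) : EReal) := by
    intro a ha
    obtain ⟨t, ht⟩ := hcon a ha
    rw [← hΛreal] at ht
    refine ⟨t.1, t.2, ?_⟩
    rcases eq_or_ne (f t.1 a) ⊥ with hb | hb
    · exact ⟨Λ.toReal - 1, by linarith, by rw [hb]; exact EReal.bot_lt_coe _⟩
    · have hne : f t.1 a ≠ ⊤ := hnotTop t.1 t.2.le a
      have hx : ((f t.1 a).toReal : EReal) = f t.1 a := EReal.coe_toReal hne hb
      set y := (f t.1 a).toReal with hy
      rw [← hx, ← EReal.coe_mul] at ht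
      have hlt : (1 / t.1) * y < Λ.toReal := EReal.coe_lt_coe_iff.1 ht
      refine ⟨((1 / t.1) * y + Λ.toReal) / 2, by linarith, ?_⟩
      rw [← hx]
      apply EReal.coe_lt_coe_iff.2
      have ht0 : (0:ℝ) < t.1 := t.2
      have h1 : (1 / t.1) * y < ((1 / t.1) * y + Λ.toReal) / 2 := by linarith
      calc y = t.1 * ((1 / t.1) * y) := by field_simp
        _ < t.1 * (((1 / t.1) * y + Λ.toReal) / 2) := by
            exact mul_lt_mul_of_pos_left h1 ht0
  choose! tf htpos ρf hρlt hflt using hpt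
  -- open cover of A
  haveI : Nonempty (↥A) := hAne.to_subtype
  let U : Q → Set Q := fun a => {x | f (tf a) x < ((tf a * ρf a : ℝ) : EReal)}
  have hUopen : ∀ a ∈ A, IsOpen (U a) := fun a ha =>
    upperSemicontinuous_iff_isOpen_preimage.1 (husc (tf a) (htpos a ha).le) _
  obtain ⟨sfin, hcover⟩ := hAcomp.elim_finite_subcover (fun a : ↥A => U a.1)
    (fun a => hUopen a.1 a.2)
    (fun x hx => mem_iUnion.2 ⟨⟨x, hx⟩, hflt x hx⟩)
  have hsne : sfin.Nonempty := by
    obtain ⟨a, ha⟩ := hAne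
    obtain ⟨i, hi, -⟩ := mem_iUnion₂.1 (hcover ha)
    exact ⟨i, hi⟩
  obtain ⟨lam, hlamlt, hlamub⟩ : ∃ l : ℝ, l < Λ.toReal ∧ ∀ a ∈ sfin, ρf (a : ↥A).1 ≤ l :=
    ⟨sfin.sup' hsne (fun a => ρf a.1),
      (Finset.sup'_lt_iff hsne).2 (fun a _ => hρlt a.1 a.2),
      fun a ha => Finset.le_sup' (fun a : ↥A => ρf a.1) ha⟩
  obtain ⟨τm, hτm0, hτmlb⟩ : ∃ τ : ℝ, 0 < τ ∧ ∀ a ∈ sfin, τ ≤ tf (a : ↥A).1 :=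
    ⟨sfin.inf' hsne (fun a => tf a.1),
      (Finset.lt_inf'_iff hsne).2 (fun a _ => htpos a.1 a.2),
      fun a ha => Finset.inf'_le (fun a : ↥A => tf a.1) ha⟩
  obtain ⟨Tm, hTmub⟩ : ∃ T : ℝ, ∀ a ∈ sfin, tf (a : ↥A).1 ≤ T :=
    ⟨sfin.sup' hsne (fun a => tf a.1), fun a ha => Finset.le_sup' (fun a : ↥A => tf a.1) ha⟩
  have hτTm : τm ≤ Tm := by
    obtain ⟨a, ha⟩ := hsne
    exact (hτmlb a ha).trans (hTmub a ha)
  have hTm0 : 0 < Tm := lt_of_lt_of_le hτm0 hτTm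
  set V : Set Q := ⋃ a ∈ sfin, U (a : ↥A).1 with hVdef
  have hVopen : IsOpen V := isOpen_biUnion fun a _ => hUopen a.1 a.2
  obtain ⟨δ, hδ, hδsub⟩ := hAcomp.exists_thickening_subset_open hVopen hcover
  obtain ⟨T₀, hT₀0, hT₀⟩ := hAattr δ hδ
  have horbV : ∀ s : ℝ, 0 ≤ s → ∀ q : Q, ϑ (T₀ + s) q ∈ V := by
    intro s hs q
    obtain ⟨a, haA, hd⟩ := hT₀ (T₀ + s) (by linarith) q
    exact hδsub (Metric.mem_thickening_iff.2 ⟨a, haA, hd⟩)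
  have hselEx : ∀ x, x ∈ V → ∃ a : ↥A, a ∈ sfin ∧ x ∈ U a.1 := by
    intro x hx
    obtain ⟨a, ha, hxa⟩ := mem_iUnion₂.1 hx
    exact ⟨a, ha, hxa⟩
  choose! sel hselS hselU using hselEx
  let st : Q → ℝ := fun x => tf (sel x).1
  have hstmem : ∀ x ∈ V, τm ≤ st x ∧ st x ≤ Tm := fun x hx =>
    ⟨hτmlb _ (hselS x hx), hTmub _ (hselS x hx)⟩
  have hstpos : ∀ x ∈ V, 0 < st x := fun x hx => lt_of_lt_of_le hτm0 (hstmem x hx).1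
  have hstf : ∀ x ∈ V, f (st x) x ≤ ((st x * lam : ℝ) : EReal) := by
    intro x hx
    refine (hselU x hx).le.trans ?_
    apply EReal.coe_le_coe_iff.2
    exact mul_le_mul_of_nonneg_left (hlamub _ (hselS x hx)) (htpos _ (sel x).2).le
  -- constants
  obtain ⟨K, hKdef⟩ : ∃ K : ℝ, K = (T₀ + Tm) * |lam| + |C| + (T₀ + 1) * |C| + (Tm + 1) * |C| :=
    ⟨_, rfl⟩
  have hK0 : 0 ≤ K := by
    rw [hKdef]
    have h1 : 0 ≤ (T₀ + Tm) * |lam| := mul_nonneg (by linarith) (abs_nonneg _)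
    have h2 : 0 ≤ (T₀ + 1) * |C| := mul_nonneg (by linarith) (abs_nonneg _)
    have h3 : 0 ≤ (Tm + 1) * |C| := mul_nonneg (by linarith) (abs_nonneg _)
    have h4 : 0 ≤ |C| := abs_nonneg _
    linarith
  obtain ⟨ε, hεdef⟩ : ∃ e : ℝ, e = Λ.toReal - lam := ⟨_, rfl⟩
  have hεpos : 0 < ε := by rw [hεdef]; linarith
  obtain ⟨tstar, htd⟩ : ∃ t : ℝ, t = max T₀ (K / ε) + 1 := ⟨_, rfl⟩
  have htpos' : 0 < tstar := by
    rw [htd]; have := le_max_left T₀ (K / ε); linarith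
  have htT₀ : T₀ < tstar := by
    rw [htd]; have := le_max_left T₀ (K / ε); linarith
  have htK : K / tstar < ε := by
    have h1 : K / ε < tstar := by rw [htd]; have := le_max_right T₀ (K / ε); linarith
    rw [div_lt_iff₀ hεpos] at h1
    rw [div_lt_iff₀ htpos']
    nlinarith
  -- the uniform bound
  have hbound : ∀ q : Q, f tstar q ≤ ((tstar * lam + K : ℝ) : EReal) := by
    intro q
    set σ : ℕ → ℝ := fun n => Nat.rec (0 : ℝ) (fun _ sk => sk + st (ϑ (T₀ + sk) q)) n with hσdef
    have hσ0 : σ 0 = 0 := rfl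
    have hσs : ∀ k, σ (k + 1) = σ k + st (ϑ (T₀ + σ k) q) := fun _ => rfl
    have hσnn : ∀ k, 0 ≤ σ k := by
      intro k
      induction k with
      | zero => rw [hσ0]
      | succ k ih =>
          rw [hσs k]
          have := hstpos _ (horbV (σ k) ih q)
          linarith
    have hstep : ∀ k, τm ≤ σ (k + 1) - σ k ∧ σ (k + 1) - σ k ≤ Tm := by
      intro k
      obtain ⟨h1, h2⟩ := hstmem _ (horbV (σ k) (hσnn k) q)
      rw [hσs k]
      constructor <;> linarith
    have hσlb : ∀ k : ℕ, (k : ℝ) * τm ≤ σ k := by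
      intro k
      induction k with
      | zero => rw [hσ0]; simp
      | succ k ih =>
          have := (hstep k).1
          push_cast
          linarith
    have hfb : ∀ k, f (σ k) (ϑ T₀ q) ≤ ((σ k * lam + |C| : ℝ) : EReal) := by
      intro k
      induction k with
      | zero =>
          rw [hσ0]
          refine (hC 0 ⟨le_rfl, zero_le_one⟩ _).trans ?_
          apply EReal.coe_le_coe_iff.2
          have := le_abs_self C
          nlinarith
      | succ k ih =>
          have hmem := horbV (σ k) (hσnn k) q
          have hpos := hstpos _ hmem
          have heq : ϑ (σ k) (ϑ T₀ q) = ϑ (T₀ + σ k) q := by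
            rw [add_comm T₀ (σ k), hϑadd (σ k) T₀ (hσnn k) hT₀0 q]
          have hss := hsub (st (ϑ (T₀ + σ k) q)) (σ k) hpos.le (hσnn k) (ϑ T₀ q)
          rw [heq] at hss
          have hgeq : σ (k + 1) = st (ϑ (T₀ + σ k) q) + σ k := by rw [hσs k]; ring
          rw [hgeq]
          refine hss.trans ?_
          refine (ereal_add_le_coe (hstf _ hmem) ih).trans ?_
          apply EReal.coe_le_coe_iff.2
          have : st (ϑ (T₀ + σ k) q) * lam + (σ k * lam + |C|)
              = (st (ϑ (T₀ + σ k) q) + σ k) * lam + |C| := by ring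
          linarith [this.le]
    -- choose the index k
    have hex : ∃ k : ℕ, tstar - T₀ < σ k := by
      obtain ⟨k, hk⟩ := exists_nat_gt ((tstar - T₀) / τm)
      refine ⟨k, ?_⟩
      have h1 := hσlb k
      rw [div_lt_iff₀ hτm0] at hk
      linarith
    have hk₀pos : Nat.find hex ≠ 0 := by
      intro h
      have hsp := Nat.find_spec hex
      rw [h, hσ0] at hsp
      linarith
    obtain ⟨k, hk⟩ : ∃ k, Nat.find hex = k + 1 :=
      ⟨Nat.find hex - 1, (Nat.succ_pred_eq_of_pos (Nat.pos_of_ne_zero hk₀pos)).symm⟩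
    have hk1 : tstar - T₀ < σ (k + 1) := hk ▸ Nat.find_spec hex
    have hk2 : σ k ≤ tstar - T₀ := by
      by_contra hc
      push_neg at hc
      exact Nat.find_min hex (by omega) hc
    obtain ⟨r, hrdef⟩ : ∃ r : ℝ, r = tstar - T₀ - σ k := ⟨_, rfl⟩
    have hr0 : 0 ≤ r := by rw [hrdef]; linarith
    have hrT : r ≤ Tm := by
      have := (hstep k).2
      rw [hrdef]; linarith
    have hde : tstar = r + (T₀ + σ k) := by rw [hrdef]; ring
    have hs1 : f tstar q ≤ f r (ϑ (T₀ + σ k) q) + f (T₀ + σ k) q := by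
      conv_lhs => rw [hde]
      exact hsub r (T₀ + σ k) hr0 (by linarith [hσnn k]) q
    have hs2 : f (T₀ + σ k) q ≤ ((σ k * lam + |C| + (T₀ + 1) * |C| : ℝ) : EReal) := by
      rw [add_comm T₀ (σ k)]
      refine (hsub (σ k) T₀ (hσnn k) hT₀0 q).trans ?_
      exact ereal_add_le_coe (hfb k) (hgrow T₀ hT₀0 q)
    have hs3 : f r (ϑ (T₀ + σ k) q) ≤ (((Tm + 1) * |C| : ℝ) : EReal) := by
      refine (hgrow r hr0 _).trans ?_
      apply EReal.coe_le_coe_iff.2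
      exact mul_le_mul_of_nonneg_right (by linarith) (abs_nonneg _)
    refine hs1.trans ((ereal_add_le_coe hs3 hs2).trans ?_)
    apply EReal.coe_le_coe_iff.2
    -- real arithmetic
    have hd0 : 0 ≤ tstar - σ k := by linarith
    have hdT : tstar - σ k ≤ T₀ + Tm := by rw [hde]; linarith
    have hd1 : (tstar - σ k) * (-lam) ≤ (tstar - σ k) * |lam| :=
      mul_le_mul_of_nonneg_left (neg_le_abs lam) hd0
    have hd2 : (tstar - σ k) * |lam| ≤ (T₀ + Tm) * |lam| :=
      mul_le_mul_of_nonneg_right hdT (abs_nonneg _)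
    rw [hKdef]
    nlinarith [hd1, hd2]
  -- final contradiction
  have hfinal : Λ ≤ ((lam + K / tstar : ℝ) : EReal) := by
    rw [hΛdef]
    refine (iInf_le _ (⟨tstar, htpos'⟩ : {s : ℝ // 0 < s})).trans (iSup_le fun q => ?_)
    refine (ereal_mul_le_coe (show (0:ℝ) < 1 / tstar by positivity) (hbound q)).trans ?_
    apply EReal.coe_le_coe_iff.2
    have : (1 / tstar) * (tstar * lam + K) = lam + K / tstar := by
      field_simp
    rw [this]
  have hlt : ((lam + K / tstar : ℝ) : EReal) < Λ := by
    rw [← hΛreal]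
    apply EReal.coe_lt_coe_iff.2
    have : lam + K / tstar < lam + ε := by linarith
    rw [hεdef] at this
    linarith
  exact absurd (lt_of_le_of_lt hfinal hlt) (lt_irrefl Λ)

theorem stmt_12 {Q : Type*} [MetricSpace Q] [Nonempty Q]
    (ϑ : ℝ → Q → Q)
    (hϑ0 : ∀ q, ϑ 0 q = q)
    (hϑadd : ∀ t s : ℝ, 0 ≤ t → 0 ≤ s → ∀ q, ϑ (t + s) q = ϑ t (ϑ s q))
    (hϑc : ContinuousOn (fun p : ℝ × Q => ϑ p.1 p.2) {p : ℝ × Q | 0 ≤ p.1})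
    (f : ℝ → Q → EReal)
    (husc : ∀ t : ℝ, 0 ≤ t → UpperSemicontinuous (f t))
    (hnotTop : ∀ t : ℝ, 0 ≤ t → ∀ q : Q, f t q ≠ ⊤)
    (hsub : ∀ t s : ℝ, 0 ≤ t → 0 ≤ s → ∀ q : Q, f (t + s) q ≤ f t (ϑ s q) + f s q)
    (hbdd : ∃ C : ℝ, ∀ t ∈ Icc (0 : ℝ) 1, ∀ q : Q, f t q ≤ (C : EReal))
    (A : Set Q) (hAcomp : IsCompact A)
    (hAinv : ∀ t : ℝ, 0 ≤ t → ϑ t '' A = A)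
    (hAattr : ∀ ε : ℝ, 0 < ε → ∃ T : ℝ, 0 ≤ T ∧ ∀ t : ℝ, T ≤ t → ∀ q : Q,
      ∃ a ∈ A, dist (ϑ t q) a < ε) :
    ((⨅ t : {t : ℝ // 0 < t}, ⨆ q : Q, ((1 / t.1 : ℝ) : EReal) * f t.1 q)
        = ⨆ q : Q, ⨅ t : {t : ℝ // 0 < t}, ((1 / t.1 : ℝ) : EReal) * f t.1 q)
      ∧ ∃ q₀ ∈ A,
        (⨅ t : {t : ℝ // 0 < t}, ⨆ q : Q, ((1 / t.1 : ℝ) : EReal) * f t.1 q)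
          = ⨅ t : {t : ℝ // 0 < t}, ((1 / t.1 : ℝ) : EReal) * f t.1 q₀ := by
  obtain ⟨q₀, hq₀A, hq₀⟩ := key_exists ϑ hϑadd f husc hnotTop hsub hbdd A hAcomp hAattr
  have h1 : (⨆ q : Q, ⨅ t : {t : ℝ // 0 < t}, ((1 / t.1 : ℝ) : EReal) * f t.1 q)
      ≤ ⨅ t : {t : ℝ // 0 < t}, ⨆ q : Q, ((1 / t.1 : ℝ) : EReal) * f t.1 q :=
    iSup_iInf_le_iInf_iSup _
  have h2 : (⨅ t : {t : ℝ // 0 < t}, ⨆ q : Q, ((1 / t.1 : ℝ) : EReal) * f t.1 q)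
      ≤ ⨅ t : {t : ℝ // 0 < t}, ((1 / t.1 : ℝ) : EReal) * f t.1 q₀ := le_iInf hq₀
  have h3 : (⨅ t : {t : ℝ // 0 < t}, ((1 / t.1 : ℝ) : EReal) * f t.1 q₀)
      ≤ ⨆ q : Q, ⨅ t : {t : ℝ // 0 < t}, ((1 / t.1 : ℝ) : EReal) * f t.1 q :=
    le_iSup (fun q : Q => ⨅ t : {t : ℝ // 0 < t}, ((1 / t.1 : ℝ) : EReal) * f t.1 q) q₀
  exact ⟨le_antisymm (h2.trans h3) h1, q₀, hq₀A, le_antisymm h2 (h3.trans h1)⟩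
end

section
/- Let Ω be a metric space and ω₀ ∈ Ω. For each ω ∈ Ω let ϑ_ω be a semiflow on a metric space Q, let f_ω be a proper subadditive family over (Q,ϑ_ω), and let A_ω ⊆ Q be a compact set, invariant (ϑ_ω^t(A_ω) = A_ω for all t ≥ 0) and attracting Q under ϑ_ω. Suppose B₀ ⊆ Q contains A_ω for every ω ∈ Ω, and that f_ω eventually converges to f_{ω₀} on B₀ as ω → ω₀: there is τ > 0 such that for every integer k ≥ 1 and every ε > 0, for all ω in some neighborhood of ω₀ one has f_ω^{τk}(q) ≤ f_{ω₀}^{τk}(q) + ε and f_{ω₀}^{τk}(q) ≤ f_ω^{τk}(q) + ε for all q ∈ B₀. Then limsup_{ω→ω₀} Λ(f_ω) ≤ Λ(f_{ω₀}), where Λ(f) := ⨅_{t>0} ⨆_{q∈Q} (1/t)·f^t(q) in EReal and the limsup is taken along the neighborhood filter of ω₀. -/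
open Set Filter

set_option maxHeartbeats 1000000

private lemma ereal_le_coe_of_forall_add {x : EReal} {y : ℝ}
    (h : ∀ η : ℝ, 0 < η → x ≤ ((y + η : ℝ) : EReal)) : x ≤ (y : EReal) := by
  by_contra hc
  push_neg at hc
  obtain ⟨c, hyc, hcx⟩ := EReal.exists_between_coe_real hc
  have hyc' : y < c := by exact_mod_cast hyc
  have := h (c - y) (by linarith)
  rw [show y + (c - y) = c by ring] at this
  exact absurd hcx (not_lt.mpr this)

private lemma ereal_le_of_inv_mul_lt {t : ℝ} (ht : 0 < t) {x : EReal} {c : ℝ}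
    (h : ((1 / t : ℝ) : EReal) * x < (c : EReal)) : x ≤ ((t * c : ℝ) : EReal) := by
  induction x using EReal.rec with
  | bot => exact bot_le
  | coe r =>
      rw [← EReal.coe_mul, EReal.coe_lt_coe_iff] at h
      have hr : r ≤ t * c := by
        have h2 : (1 / t) * r * t < c * t := mul_lt_mul_of_pos_right h ht
        rw [one_div, inv_mul_eq_div, div_mul_cancel₀ _ (ne_of_gt ht)] at h2
        nlinarith
      exact_mod_cast hr
  | top =>
      rw [EReal.mul_top_of_pos (by exact_mod_cast (by positivity : (0:ℝ) < 1/t))] at h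
      exact absurd h (not_lt.mpr le_top)

theorem stmt_13 {Ω : Type*} [MetricSpace Ω] {Q : Type*} [MetricSpace Q] (ω₀ : Ω)
    (ϑ : Ω → ℝ → Q → Q)
    (hϑ0 : ∀ ω q, ϑ ω 0 q = q)
    (hϑadd : ∀ ω, ∀ t s : ℝ, 0 ≤ t → 0 ≤ s → ∀ q, ϑ ω (t + s) q = ϑ ω t (ϑ ω s q))
    (hϑc : ∀ ω, ContinuousOn (fun p : ℝ × Q => ϑ ω p.1 p.2) {p : ℝ × Q | 0 ≤ p.1})
    (f : Ω → ℝ → Q → EReal)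
    (husc : ∀ ω, ∀ t : ℝ, 0 ≤ t → UpperSemicontinuous (f ω t))
    (hnotTop : ∀ ω, ∀ t : ℝ, 0 ≤ t → ∀ q : Q, f ω t q ≠ ⊤)
    (hsub : ∀ ω, ∀ t s : ℝ, 0 ≤ t → 0 ≤ s → ∀ q : Q,
      f ω (t + s) q ≤ f ω t (ϑ ω s q) + f ω s q)
    (hbdd : ∀ ω, ∃ C : ℝ, ∀ t ∈ Icc (0 : ℝ) 1, ∀ q : Q, f ω t q ≤ (C : EReal))
    (A : Ω → Set Q)
    (hAcomp : ∀ ω, IsCompact (A ω))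
    (hAinv : ∀ ω, ∀ t : ℝ, 0 ≤ t → ϑ ω t '' A ω = A ω)
    (hAattr : ∀ ω, ∀ ε : ℝ, 0 < ε → ∃ T : ℝ, 0 ≤ T ∧ ∀ t : ℝ, T ≤ t → ∀ q : Q,
      ∃ a ∈ A ω, dist (ϑ ω t q) a < ε)
    (B₀ : Set Q) (hB : ∀ ω, A ω ⊆ B₀)
    (τ : ℝ) (hτ : 0 < τ)
    (hconv : ∀ k : ℕ, 1 ≤ k → ∀ ε : ℝ, 0 < ε → ∀ᶠ ω in nhds ω₀, ∀ q ∈ B₀,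
      f ω (τ * k) q ≤ f ω₀ (τ * k) q + (ε : EReal) ∧
      f ω₀ (τ * k) q ≤ f ω (τ * k) q + (ε : EReal)) :
    Filter.limsup
        (fun ω => ⨅ t : {t : ℝ // 0 < t}, ⨆ q : Q, ((1 / t.1 : ℝ) : EReal) * f ω t.1 q)
        (nhds ω₀)
      ≤ ⨅ t : {t : ℝ // 0 < t}, ⨆ q : Q, ((1 / t.1 : ℝ) : EReal) * f ω₀ t.1 q := by
  classical
  set Λ : Ω → EReal :=
    fun ω => ⨅ t : {t : ℝ // 0 < t}, ⨆ q : Q, ((1 / t.1 : ℝ) : EReal) * f ω t.1 q with hΛdef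
  have hΛapp : ∀ ω : Ω, Λ ω
      = ⨅ t : {t : ℝ // 0 < t}, ⨆ q : Q, ((1 / t.1 : ℝ) : EReal) * f ω t.1 q :=
    fun ω => rfl
  clear_value Λ
  rw [← hΛapp ω₀]
  -- Step A: global growth bound f ω s q ≤ (s+2)*C
  have hgrow : ∀ ω : Ω, ∃ C : ℝ, 0 ≤ C ∧ ∀ s : ℝ, 0 ≤ s → ∀ q : Q,
      f ω s q ≤ (((s + 2) * C : ℝ) : EReal) := by
    intro ω
    obtain ⟨C₀, hC₀⟩ := hbdd ω
    obtain ⟨C, hCdef⟩ : ∃ C : ℝ, C = max C₀ 0 := ⟨_, rfl⟩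
    have hC0 : (0:ℝ) ≤ C := by rw [hCdef]; exact le_max_right _ _
    refine ⟨C, hC0, ?_⟩
    have hC : ∀ t ∈ Icc (0:ℝ) 1, ∀ q : Q, f ω t q ≤ ((C : ℝ) : EReal) := by
      intro t ht q
      refine (hC₀ t ht q).trans ?_
      apply EReal.coe_le_coe_iff.mpr
      rw [hCdef]; exact le_max_left _ _
    have hnat : ∀ n : ℕ, ∀ q : Q, f ω (n : ℝ) q ≤ ((((n:ℝ) + 1) * C : ℝ) : EReal) := by
      intro n
      induction n with
      | zero =>
          intro q
          have h1 := hC 0 ⟨le_refl _, zero_le_one⟩ q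
          have h2 : f ω ((0:ℕ):ℝ) q = f ω 0 q := by norm_num
          rw [h2]
          refine h1.trans ?_
          apply EReal.coe_le_coe_iff.mpr
          push_cast
          linarith
      | succ n ih =>
          intro q
          have harg : ((n + 1 : ℕ) : ℝ) = (n : ℝ) + 1 := by push_cast; ring
          rw [harg]
          have h1 : f ω ((n : ℝ) + 1) q ≤ f ω (n:ℝ) (ϑ ω 1 q) + f ω 1 q :=
            hsub ω (n:ℝ) 1 (Nat.cast_nonneg n) zero_le_one q
          have h2 : f ω (n:ℝ) (ϑ ω 1 q) + f ω 1 q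
              ≤ ((((n:ℝ) + 1) * C : ℝ) : EReal) + ((C : ℝ) : EReal) :=
            add_le_add (ih _) (hC 1 ⟨zero_le_one, le_refl _⟩ q)
          have h3 : ((((n:ℝ) + 1) * C : ℝ) : EReal) + ((C : ℝ) : EReal)
              = ((((n:ℝ) + 1 + 1) * C : ℝ) : EReal) := by
            rw [← EReal.coe_add]; congr 1; ring
          exact h1.trans (h2.trans_eq h3)
    intro s hs q
    have hns : ((⌊s⌋₊:ℕ):ℝ) ≤ s := Nat.floor_le hs
    have hsn : s < ((⌊s⌋₊:ℕ):ℝ) + 1 := Nat.lt_floor_add_one s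
    obtain ⟨n, hn⟩ : ∃ n : ℕ, n = ⌊s⌋₊ := ⟨_, rfl⟩
    rw [← hn] at hns hsn
    have hr0 : 0 ≤ s - (n:ℝ) := by linarith
    have hr1 : s - (n:ℝ) ≤ 1 := by linarith
    have h1 : f ω s q ≤ f ω (n:ℝ) (ϑ ω (s - n) q) + f ω (s - n) q := by
      have := hsub ω (n:ℝ) (s - n) (Nat.cast_nonneg n) hr0 q
      rwa [show (n:ℝ) + (s - n) = s by ring] at this
    have h2 : f ω (n:ℝ) (ϑ ω (s - n) q) + f ω (s - n) q
        ≤ ((((n:ℝ) + 1) * C : ℝ) : EReal) + ((C : ℝ) : EReal) :=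
      add_le_add (hnat n _) (hC (s - n) ⟨hr0, hr1⟩ q)
    have h3 : ((((n:ℝ) + 1) * C : ℝ) : EReal) + ((C : ℝ) : EReal)
        ≤ (((s + 2) * C : ℝ) : EReal) := by
      rw [← EReal.coe_add]
      apply EReal.coe_le_coe_iff.mpr
      nlinarith [mul_nonneg (sub_nonneg.2 hns) hC0]
    exact h1.trans (h2.trans h3)
  -- Step ITER: iterated subadditivity
  have hiter : ∀ (ω : Ω) (t b T : ℝ), 0 ≤ t → 0 ≤ T →
      (∀ s : ℝ, T ≤ s → ∀ q : Q, f ω t (ϑ ω s q) ≤ (b : EReal)) →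
      ∀ n : ℕ, ∀ q : Q, f ω ((n:ℝ) * t + T) q ≤ (((n:ℝ) * b : ℝ) : EReal) + f ω T q := by
    intro ω t b T ht hT hb n
    induction n with
    | zero => intro q; simp
    | succ n ih =>
        intro q
        have hnt : (0:ℝ) ≤ (n:ℝ) * t + T := by positivity
        have harg : ((n + 1 : ℕ):ℝ) * t + T = t + ((n:ℝ) * t + T) := by push_cast; ring
        rw [harg]
        have h1 : f ω (t + ((n:ℝ)*t + T)) q
            ≤ f ω t (ϑ ω ((n:ℝ)*t + T) q) + f ω ((n:ℝ)*t + T) q :=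
          hsub ω t _ ht hnt q
        have h2 : f ω t (ϑ ω ((n:ℝ)*t + T) q) ≤ (b : EReal) := by
          apply hb
          nlinarith [mul_nonneg (Nat.cast_nonneg (α := ℝ) n) ht]
        have h3 : f ω t (ϑ ω ((n:ℝ)*t + T) q) + f ω ((n:ℝ)*t + T) q
            ≤ (b : EReal) + ((((n:ℝ) * b : ℝ) : EReal) + f ω T q) :=
          add_le_add h2 (ih q)
        have h4 : (b : EReal) + ((((n:ℝ) * b : ℝ) : EReal) + f ω T q)
            = (((((n + 1 : ℕ)):ℝ) * b : ℝ) : EReal) + f ω T q := by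
          rw [← add_assoc, ← EReal.coe_add]
          congr 1
          exact_mod_cast (by push_cast; ring : b + (n:ℝ)*b = ((n+1:ℕ):ℝ)*b)
        exact h1.trans (h3.trans_eq h4)
  -- Step B: key bound via attractor and upper semicontinuity
  have hkey : ∀ (ω : Ω) (t : ℝ), 0 < t → ∀ b : ℝ,
      (∀ a ∈ A ω, f ω t a ≤ (b : EReal)) → Λ ω ≤ ((b / t : ℝ) : EReal) := by
    intro ω t ht b hb
    apply ereal_le_coe_of_forall_add
    intro η hη
    obtain ⟨b₁, hb₁⟩ : ∃ x : ℝ, x = b + t * η / 2 := ⟨_, rfl⟩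
    have hb₁lt : ∀ a ∈ A ω, f ω t a < (b₁ : EReal) := by
      intro a ha
      refine lt_of_le_of_lt (hb a ha) ?_
      apply EReal.coe_lt_coe_iff.mpr
      rw [hb₁]; nlinarith
    have hU : IsOpen (f ω t ⁻¹' Iio ((b₁ : ℝ) : EReal)) :=
      (upperSemicontinuous_iff_isOpen_preimage.1 (husc ω t ht.le)) _
    have hAU : A ω ⊆ f ω t ⁻¹' Iio ((b₁:ℝ):EReal) := fun a ha => hb₁lt a ha
    obtain ⟨δ, hδ, hthick⟩ := (hAcomp ω).exists_thickening_subset_open hU hAU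
    obtain ⟨T, hT0, hTattr⟩ := hAattr ω δ hδ
    obtain ⟨C, hC0, hCg⟩ := hgrow ω
    have hbig : ∀ s : ℝ, T ≤ s → ∀ q : Q, f ω t (ϑ ω s q) ≤ (b₁ : EReal) := by
      intro s hs q
      obtain ⟨a, ha, hda⟩ := hTattr s hs q
      have hmem : ϑ ω s q ∈ Metric.thickening δ (A ω) :=
        Metric.mem_thickening_iff.2 ⟨a, ha, hda⟩
      exact le_of_lt (hthick hmem)
    obtain ⟨D, hD⟩ : ∃ D : ℝ, D = (T + 2) * C := ⟨_, rfl⟩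
    have hDnn : 0 ≤ D := by rw [hD]; exact mul_nonneg (by linarith) hC0
    have hbound : ∀ n : ℕ, ∀ q : Q,
        f ω ((n:ℝ)*t + T) q ≤ (((n:ℝ)*b₁ + D : ℝ) : EReal) := by
      intro n q
      calc f ω ((n:ℝ)*t+T) q
          ≤ (((n:ℝ)*b₁ : ℝ) : EReal) + f ω T q := hiter ω t b₁ T ht.le hT0 hbig n q
        _ ≤ (((n:ℝ)*b₁ : ℝ) : EReal) + ((D : ℝ) : EReal) := by
            exact add_le_add_right (by rw [hD]; exact hCg T hT0 q) _
        _ = (((n:ℝ)*b₁ + D : ℝ) : EReal) := by rw [← EReal.coe_add]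
    obtain ⟨n₀, hn₀⟩ := exists_nat_ge ((D - b * T / t - η * T) * (2 / (t * η)))
    obtain ⟨n, hndef⟩ : ∃ n : ℕ, n = n₀ + 1 := ⟨_, rfl⟩
    have hn1 : (1:ℝ) ≤ (n:ℝ) := by
      rw [hndef]; exact_mod_cast Nat.succ_le_succ (Nat.zero_le n₀)
    have hnge : ((D - b * T / t - η * T) * (2 / (t * η))) ≤ (n:ℝ) := by
      rw [hndef]
      exact hn₀.trans (by exact_mod_cast Nat.le_succ n₀)
    obtain ⟨u, hu⟩ : ∃ u : ℝ, u = (n:ℝ) * t + T := ⟨_, rfl⟩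
    have hupos : 0 < u := by
      rw [hu]
      nlinarith [mul_le_mul_of_nonneg_right hn1 ht.le]
    have hΛle : Λ ω ≤ ⨆ q : Q, ((1/u : ℝ) : EReal) * f ω u q := by
      rw [hΛapp ω]
      exact iInf_le (fun t : {t : ℝ // 0 < t} =>
        ⨆ q : Q, ((1 / t.1 : ℝ) : EReal) * f ω t.1 q) (⟨u, hupos⟩ : {t : ℝ // 0 < t})
    have hsup : (⨆ q : Q, ((1/u:ℝ):EReal) * f ω u q)
        ≤ (((1/u) * ((n:ℝ)*b₁ + D) : ℝ) : EReal) := by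
      apply iSup_le
      intro q
      have hfq : f ω u q ≤ (((n:ℝ)*b₁ + D : ℝ) : EReal) := by
        rw [hu]; exact hbound n q
      calc ((1/u:ℝ):EReal) * f ω u q
          ≤ ((1/u:ℝ):EReal) * (((n:ℝ)*b₁ + D :ℝ):EReal) :=
            mul_le_mul_of_nonneg_left hfq
              (by exact_mod_cast (by positivity : (0:ℝ) ≤ 1/u))
        _ = _ := by rw [← EReal.coe_mul]
    refine hΛle.trans (hsup.trans ?_)
    apply EReal.coe_le_coe_iff.mpr
    have h2 : (D - b*T/t - η*T) ≤ (n:ℝ) * (t*η/2) := by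
      have hmul := mul_le_mul_of_nonneg_right hnge (by positivity : (0:ℝ) ≤ t*η/2)
      calc D - b*T/t - η*T = ((D - b*T/t - η*T) * (2/(t*η))) * (t*η/2) := by
            field_simp
        _ ≤ (n:ℝ) * (t*η/2) := hmul
    have hexp : (b/t + η) * u = (n:ℝ)*b + b*T/t + η*(n:ℝ)*t + η*T := by
      rw [hu]; field_simp; ring
    have key : (n:ℝ)*b₁ + D ≤ (b/t + η) * u := by
      rw [hexp, hb₁]; nlinarith
    calc (1/u) * ((n:ℝ)*b₁ + D) ≤ (1/u) * ((b/t + η)*u) := by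
          apply mul_le_mul_of_nonneg_left key (by positivity)
      _ = b/t + η := by field_simp
  -- Step C: sampling along arithmetic times τ * k
  have harith : ∀ c c' : ℝ, Λ ω₀ < (c : EReal) → c < c' →
      ∃ k : ℕ, 1 ≤ k ∧ ∀ q : Q, f ω₀ (τ * k) q ≤ ((τ * k * c' : ℝ) : EReal) := by
    intro c c' hc hcc
    rw [hΛapp ω₀] at hc
    obtain ⟨⟨t, ht⟩, hts⟩ := iInf_lt_iff.1 hc
    have hts' : (⨆ q : Q, ((1/t:ℝ):EReal) * f ω₀ t q) < (c:EReal) := hts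
    have hqt : ∀ q : Q, f ω₀ t q ≤ ((t * c : ℝ) : EReal) := by
      intro q
      refine ereal_le_of_inv_mul_lt ht (lt_of_le_of_lt ?_ hts')
      exact le_iSup (fun q : Q => ((1/t:ℝ):EReal) * f ω₀ t q) q
    obtain ⟨C, hC0, hCg⟩ := hgrow ω₀
    obtain ⟨E, hE⟩ : ∃ E : ℝ, E = t * |c| + (t + 2) * C := ⟨_, rfl⟩
    obtain ⟨k₀, hk₀⟩ := exists_nat_ge (E / (τ * (c' - c)))
    obtain ⟨k, hkdef⟩ : ∃ k : ℕ, k = k₀ + 1 := ⟨_, rfl⟩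
    have hk1 : 1 ≤ k := by rw [hkdef]; exact Nat.succ_le_succ (Nat.zero_le _)
    have hkR : (1:ℝ) ≤ (k:ℝ) := by exact_mod_cast hk1
    have hτk : (0:ℝ) < τ * k := mul_pos hτ (by linarith)
    have hkE : E ≤ τ * (k:ℝ) * (c' - c) := by
      have h1 : E / (τ * (c' - c)) ≤ (k:ℝ) := by
        rw [hkdef]
        exact hk₀.trans (by exact_mod_cast Nat.le_succ k₀)
      have h2 : 0 < τ * (c' - c) := mul_pos hτ (by linarith)
      calc E = (E / (τ*(c'-c))) * (τ*(c'-c)) := by rw [div_mul_cancel₀ _ h2.ne']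
        _ ≤ (k:ℝ) * (τ*(c'-c)) := mul_le_mul_of_nonneg_right h1 h2.le
        _ = τ * (k:ℝ) * (c'-c) := by ring
    refine ⟨k, hk1, ?_⟩
    intro q
    have htknn : 0 ≤ τ * (k:ℝ) / t := by positivity
    have hfl1 : ((⌊τ * (k:ℝ) / t⌋₊ : ℕ):ℝ) ≤ τ * (k:ℝ) / t := Nat.floor_le htknn
    have hfl2 : τ * (k:ℝ) / t < ((⌊τ * (k:ℝ) / t⌋₊ : ℕ):ℝ) + 1 :=
      Nat.lt_floor_add_one _
    obtain ⟨n, hn⟩ : ∃ n : ℕ, n = ⌊τ * (k:ℝ) / t⌋₊ := ⟨_, rfl⟩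
    rw [← hn] at hfl1 hfl2
    have hnle : (n:ℝ) * t ≤ τ * k := by
      calc (n:ℝ)*t ≤ (τ*(k:ℝ)/t)*t := mul_le_mul_of_nonneg_right hfl1 ht.le
        _ = τ*k := by field_simp
    have hnge : τ * (k:ℝ) < ((n:ℝ) + 1) * t := by
      calc τ*(k:ℝ) = (τ*(k:ℝ)/t)*t := by field_simp
        _ < ((n:ℝ)+1)*t := mul_lt_mul_of_pos_right hfl2 ht
    obtain ⟨r, hr⟩ : ∃ r : ℝ, r = τ * (k:ℝ) - (n:ℝ) * t := ⟨_, rfl⟩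
    have hr0 : 0 ≤ r := by rw [hr]; linarith
    have hrt : r ≤ t := by rw [hr]; nlinarith
    have hglob : ∀ s : ℝ, r ≤ s → ∀ q' : Q, f ω₀ t (ϑ ω₀ s q') ≤ ((t*c : ℝ):EReal) :=
      fun s _ q' => hqt _
    have h1 : f ω₀ ((n:ℝ)*t + r) q ≤ (((n:ℝ)*(t*c) : ℝ):EReal) + f ω₀ r q :=
      hiter ω₀ t (t*c) r ht.le hr0 hglob n q
    have harg : (n:ℝ)*t + r = τ*k := by rw [hr]; ring
    rw [harg] at h1
    have h2 : f ω₀ r q ≤ (((r+2)*C : ℝ):EReal) := hCg r hr0 q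
    calc f ω₀ (τ*k) q ≤ (((n:ℝ)*(t*c):ℝ):EReal) + f ω₀ r q := h1
      _ ≤ (((n:ℝ)*(t*c):ℝ):EReal) + (((r+2)*C:ℝ):EReal) := add_le_add_right h2 _
      _ = (((n:ℝ)*(t*c) + (r+2)*C : ℝ):EReal) := by rw [← EReal.coe_add]
      _ ≤ ((τ*k*c' : ℝ):EReal) := by
          apply EReal.coe_le_coe_iff.mpr
          have hc1 : (n:ℝ)*t*c ≤ τ*k*c + t*|c| := by
            rcases le_or_gt 0 c with h|h
            · rw [abs_of_nonneg h]
              nlinarith [mul_nonneg (sub_nonneg.2 hnle) h, mul_nonneg ht.le h]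
            · rw [abs_of_neg h]
              nlinarith [mul_pos (sub_pos.2 hnge) (neg_pos.2 h)]
          have hc2 : (r+2)*C ≤ (t+2)*C :=
            mul_le_mul_of_nonneg_right (by linarith) hC0
          rw [hE] at hkE
          nlinarith
  -- Step D: eventual bound
  have hev : ∀ c' : ℝ, Λ ω₀ < (c' : EReal) → ∀ᶠ ω in nhds ω₀, Λ ω ≤ (c' : EReal) := by
    intro c' hc'
    obtain ⟨c, hc1, hc2⟩ := EReal.exists_between_coe_real hc'
    have hcc' : c < c' := by exact_mod_cast hc2
    obtain ⟨cm, hcm⟩ : ∃ x : ℝ, x = (c + c') / 2 := ⟨_, rfl⟩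
    obtain ⟨k, hk1, hkb⟩ := harith c cm hc1 (by rw [hcm]; linarith)
    have hkR : (1:ℝ) ≤ (k:ℝ) := by exact_mod_cast hk1
    have hτk : (0:ℝ) < τ * k := mul_pos hτ (by linarith)
    obtain ⟨ε, hε⟩ : ∃ x : ℝ, x = τ * (k:ℝ) * (c' - cm) := ⟨_, rfl⟩
    have hεpos : 0 < ε := by
      rw [hε]
      have hlt : (0:ℝ) < c' - cm := by rw [hcm]; linarith
      exact mul_pos hτk hlt
    filter_upwards [hconv k hk1 ε hεpos] with ω hω
    have hAb : ∀ a ∈ A ω, f ω (τ * k) a ≤ ((τ * k * c' : ℝ) : EReal) := by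
      intro a ha
      calc f ω (τ*k) a ≤ f ω₀ (τ*k) a + ((ε:ℝ):EReal) := (hω a (hB ω ha)).1
        _ ≤ ((τ*k*cm : ℝ):EReal) + ((ε:ℝ):EReal) := add_le_add_left (hkb a) _
        _ = ((τ*k*cm + ε : ℝ):EReal) := by rw [← EReal.coe_add]
        _ = ((τ*k*c' : ℝ):EReal) := by rw [hε]; congr 1; ring
    have hfin := hkey ω (τ*k) hτk (τ*k*c') hAb
    rwa [show (τ*(k:ℝ)*c')/(τ*(k:ℝ)) = c' from
      mul_div_cancel_left₀ c' (ne_of_gt hτk)] at hfin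
  -- Conclusion
  by_contra hcon
  push_neg at hcon
  obtain ⟨c', h1, h2⟩ := EReal.exists_between_coe_real hcon
  have hls : Filter.limsup Λ (nhds ω₀) ≤ (c' : EReal) :=
    Filter.limsup_le_of_le (by isBoundedDefault) (hev c' h1)
  exact absurd h2 (not_lt.mpr hls)
end

section
/- Let Ω and Q be metric spaces, ω₀ ∈ Ω, and E a real Banach space. For each ω ∈ Ω let ϑ_ω be a semiflow on Q and Ξ_ω a linear cocycle in E over (Q,ϑ_ω) such that for every t ≥ 0 the map q ↦ Ξ_ω^t(q) is continuous in the operator norm and sup_{t∈[0,1]} sup_{q∈Q} ‖Ξ_ω^t(q)‖ < ∞. For each ω let A_ω ⊆ Q be a compact set, invariant and attracting Q under ϑ_ω, and suppose all A_ω are contained in a set B₀ ⊆ Q. Suppose there is τ > 0 such that for every integer k ≥ 1, sup_{q∈B₀} ‖Ξ_ω^{τk}(q) − Ξ_{ω₀}^{τk}(q)‖ → 0 as ω → ω₀. For each ω define the largest uniform Lyapunov exponent λ₁(Ξ_ω) := inf{ r ∈ ℝ : ∃ t > 0 such that ‖Ξ_ω^t(q)‖ ≤ e^{rt} for all q ∈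 Q }, as an element of ℝ ∪ {±∞}. Then limsup_{ω→ω₀} λ₁(Ξ_ω) ≤ λ₁(Ξ_{ω₀}). -/
open Set Filter

set_option maxHeartbeats 1000000 in
theorem stmt_14 {Ω : Type*} [MetricSpace Ω] {Q : Type*} [MetricSpace Q]
    {E : Type*} [NormedAddCommGroup E] [NormedSpace ℝ E] [CompleteSpace E]
    (ω₀ : Ω)
    (ϑ : Ω → ℝ → Q → Q)
    (hϑ0 : ∀ ω q, ϑ ω 0 q = q)
    (hϑadd : ∀ ω, ∀ t s : ℝ, 0 ≤ t → 0 ≤ s → ∀ q, ϑ ω (t + s) q = ϑ ω t (ϑ ω s q))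
    (hϑc : ∀ ω, ContinuousOn (fun p : ℝ × Q => ϑ ω p.1 p.2) {p : ℝ × Q | 0 ≤ p.1})
    (Ξ : Ω → ℝ → Q → E →L[ℝ] E)
    (hΞ0 : ∀ ω q, Ξ ω 0 q = ContinuousLinearMap.id ℝ E)
    (hΞadd : ∀ ω, ∀ t s : ℝ, 0 ≤ t → 0 ≤ s → ∀ q,
      Ξ ω (t + s) q = (Ξ ω t (ϑ ω s q)).comp (Ξ ω s q))
    (hΞc : ∀ ω, ContinuousOn (fun p : ℝ × Q × E => Ξ ω p.1 p.2.1 p.2.2)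
      {p : ℝ × Q × E | 0 ≤ p.1})
    (hΞnormc : ∀ ω, ∀ t : ℝ, 0 ≤ t → Continuous fun q : Q => Ξ ω t q)
    (hΞbdd : ∀ ω, ∃ C : ℝ, ∀ t ∈ Icc (0 : ℝ) 1, ∀ q : Q, ‖Ξ ω t q‖ ≤ C)
    (A : Ω → Set Q)
    (hAcomp : ∀ ω, IsCompact (A ω))
    (hAinv : ∀ ω, ∀ t : ℝ, 0 ≤ t → ϑ ω t '' A ω = A ω)
    (hAattr : ∀ ω, ∀ ε : ℝ, 0 < ε → ∃ T : ℝ, 0 ≤ T ∧ ∀ t : ℝ, T ≤ t → ∀ q : Q,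
      ∃ a ∈ A ω, dist (ϑ ω t q) a < ε)
    (B₀ : Set Q) (hB : ∀ ω, A ω ⊆ B₀)
    (τ : ℝ) (hτ : 0 < τ)
    (hconv : ∀ k : ℕ, 1 ≤ k → ∀ ε : ℝ, 0 < ε → ∀ᶠ ω in nhds ω₀, ∀ q ∈ B₀,
      ‖Ξ ω (τ * k) q - Ξ ω₀ (τ * k) q‖ ≤ ε) :
    Filter.limsup
        (fun ω => ⨅ r : {r : ℝ | ∃ t > (0 : ℝ), ∀ q : Q, ‖Ξ ω t q‖ ≤ Real.exp (r * t)},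
          ((r : ℝ) : EReal))
        (nhds ω₀)
      ≤ ⨅ r : {r : ℝ | ∃ t > (0 : ℝ), ∀ q : Q, ‖Ξ ω₀ t q‖ ≤ Real.exp (r * t)},
          ((r : ℝ) : EReal) := by
  -- Lemma A : uniform bound on bounded time intervals
  have lemA : ∀ ω : Ω, ∃ C : ℝ, 1 ≤ C ∧ ∀ n : ℕ, ∀ t : ℝ, 0 ≤ t → t ≤ n → ∀ q : Q,
      ‖Ξ ω t q‖ ≤ C ^ n := by
    intro ω
    obtain ⟨C, hC⟩ := hΞbdd ω
    refine ⟨max C 1, le_max_right _ _, ?_⟩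
    set D := max C 1 with hD
    have hD1 : (1:ℝ) ≤ D := le_max_right _ _
    have hD0 : (0:ℝ) ≤ D := by linarith
    have hCD : ∀ t ∈ Icc (0:ℝ) 1, ∀ q, ‖Ξ ω t q‖ ≤ D :=
      fun t ht q => (hC t ht q).trans (le_max_left _ _)
    intro n
    induction n with
    | zero =>
      intro t ht ht' q
      have ht0 : t = 0 := le_antisymm (by exact_mod_cast ht') ht
      subst ht0
      rw [hΞ0]
      simpa using ContinuousLinearMap.norm_id_le (𝕜 := ℝ) (E := E)
    | succ n ih =>
      intro t ht ht' q
      by_cases h : t ≤ n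
      · exact (ih t ht h q).trans (pow_le_pow_right₀ hD1 (Nat.le_succ n))
      · push_neg at h
        by_cases h1 : t ≤ 1
        · exact (hCD t ⟨ht, h1⟩ q).trans (le_self_pow₀ hD1 n.succ_ne_zero)
        · push_neg at h1
          have ht1 : (0:ℝ) ≤ t - 1 := by linarith
          have htn : t - 1 ≤ n := by
            push_cast at ht' ⊢; linarith
          have hdec := hΞadd ω 1 (t - 1) zero_le_one ht1 q
          have hts : (1:ℝ) + (t - 1) = t := by ring
          rw [hts] at hdec
          calc ‖Ξ ω t q‖ = ‖(Ξ ω 1 (ϑ ω (t-1) q)).comp (Ξ ω (t-1) q)‖ := by rw [hdec]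
            _ ≤ ‖Ξ ω 1 (ϑ ω (t-1) q)‖ * ‖Ξ ω (t-1) q‖ := ContinuousLinearMap.opNorm_comp_le _ _
            _ ≤ D * D ^ n := by
                have h1' := hCD 1 ⟨zero_le_one, le_refl 1⟩ (ϑ ω (t-1) q)
                have h2' := ih (t-1) ht1 htn q
                exact mul_le_mul h1' h2' (norm_nonneg _) hD0
            _ = D ^ (n+1) := by ring
  refine le_iInf ?_
  rintro ⟨r, hrmem⟩
  obtain ⟨t₀, ht₀, hr⟩ := hrmem
  -- main step : for every ε > 0 the limsup candidate is eventually ≤ r + ε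
  have main : ∀ ε : ℝ, 0 < ε → ∀ᶠ ω in nhds ω₀,
      (⨅ r' : {r' : ℝ | ∃ t > (0 : ℝ), ∀ q : Q, ‖Ξ ω t q‖ ≤ Real.exp (r' * t)},
        ((r' : ℝ) : EReal)) ≤ ((r + ε : ℝ) : EReal) := by
    intro ε hε
    obtain ⟨C₀, hC₀1, hC₀⟩ := lemA ω₀
    set n₀ : ℕ := ⌈t₀⌉₊ with hn₀
    set K : ℝ := C₀ ^ n₀ * Real.exp (|r| * t₀) with hKdef
    have hCpow1 : (1:ℝ) ≤ C₀ ^ n₀ := one_le_pow₀ hC₀1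
    have hexp1 : (1:ℝ) ≤ Real.exp (|r| * t₀) :=
      Real.one_le_exp (by positivity)
    have hK1 : (1:ℝ) ≤ K := by
      calc (1:ℝ) = 1 * 1 := by ring
        _ ≤ C₀ ^ n₀ * Real.exp (|r| * t₀) := by
            exact mul_le_mul hCpow1 hexp1 zero_le_one (by linarith)
    have hKpos : (0:ℝ) < K := by linarith
    -- growth bound for the cocycle at ω₀
    have hpow : ∀ m : ℕ, ∀ q : Q, ‖Ξ ω₀ ((m:ℝ) * t₀) q‖ ≤ Real.exp (r * ((m:ℝ) * t₀)) := by
      intro m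
      induction m with
      | zero =>
        intro q
        simp only [Nat.cast_zero, zero_mul, mul_zero, Real.exp_zero]
        rw [hΞ0]
        simpa using ContinuousLinearMap.norm_id_le (𝕜 := ℝ) (E := E)
      | succ m ih =>
        intro q
        have hmt : (0:ℝ) ≤ (m:ℝ) * t₀ := by positivity
        have hdec := hΞadd ω₀ t₀ ((m:ℝ) * t₀) ht₀.le hmt q
        have hts : ((m:ℝ)+1) * t₀ = t₀ + (m:ℝ) * t₀ := by ring
        calc ‖Ξ ω₀ (((m:ℕ)+1 : ℕ) * t₀) q‖
            = ‖(Ξ ω₀ t₀ (ϑ ω₀ ((m:ℝ)*t₀) q)).comp (Ξ ω₀ ((m:ℝ)*t₀) q)‖ := by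
              push_cast
              rw [hts, hdec]
          _ ≤ ‖Ξ ω₀ t₀ (ϑ ω₀ ((m:ℝ)*t₀) q)‖ * ‖Ξ ω₀ ((m:ℝ)*t₀) q‖ :=
              ContinuousLinearMap.opNorm_comp_le _ _
          _ ≤ Real.exp (r * t₀) * Real.exp (r * ((m:ℝ)*t₀)) := by
              exact mul_le_mul (hr _) (ih q) (norm_nonneg _) (Real.exp_pos _).le
          _ = Real.exp (r * (((m:ℕ)+1 : ℕ) * t₀)) := by
              rw [← Real.exp_add]; push_cast; ring_nf
    have hbound₀ : ∀ t : ℝ, 0 ≤ t → ∀ q : Q, ‖Ξ ω₀ t q‖ ≤ K * Real.exp (r * t) := by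
      intro t ht q
      set m : ℕ := ⌊t / t₀⌋₊ with hm
      have hmle : (m:ℝ) * t₀ ≤ t := by
        rw [← le_div_iff₀ ht₀]
        exact Nat.floor_le (by positivity)
      have hlt : t < ((m:ℝ) + 1) * t₀ := by
        rw [← div_lt_iff₀ ht₀]
        exact_mod_cast Nat.lt_floor_add_one (t / t₀)
      set s : ℝ := t - (m:ℝ) * t₀ with hs
      have hs0 : 0 ≤ s := by linarith
      have hst₀ : s ≤ t₀ := by nlinarith
      have hsn₀ : s ≤ (n₀:ℝ) := hst₀.trans (Nat.le_ceil t₀)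
      have hdec := hΞadd ω₀ s ((m:ℝ) * t₀) hs0 (by positivity) q
      have hts : s + (m:ℝ) * t₀ = t := by ring
      rw [hts] at hdec
      have h1 : ‖Ξ ω₀ s (ϑ ω₀ ((m:ℝ)*t₀) q)‖ ≤ C₀ ^ n₀ := hC₀ n₀ s hs0 hsn₀ _
      have h2 : ‖Ξ ω₀ ((m:ℝ)*t₀) q‖ ≤ Real.exp (r * ((m:ℝ)*t₀)) := hpow m q
      have h3 : Real.exp (r * ((m:ℝ)*t₀)) ≤ Real.exp (|r| * t₀) * Real.exp (r * t) := by
        rw [← Real.exp_add]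
        apply Real.exp_le_exp.mpr
        have habs : -(r * s) ≤ |r| * t₀ := by
          calc -(r * s) ≤ |r * s| := neg_le_abs _
            _ = |r| * |s| := abs_mul r s
            _ ≤ |r| * t₀ := by
                apply mul_le_mul_of_nonneg_left _ (abs_nonneg r)
                rw [abs_of_nonneg hs0]; exact hst₀
        have h5 : r * ((m:ℝ) * t₀) = r * t - r * s := by rw [← hts]; ring
        linarith
      calc ‖Ξ ω₀ t q‖ = ‖(Ξ ω₀ s (ϑ ω₀ ((m:ℝ)*t₀) q)).comp (Ξ ω₀ ((m:ℝ)*t₀) q)‖ := by rw [hdec]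
        _ ≤ ‖Ξ ω₀ s (ϑ ω₀ ((m:ℝ)*t₀) q)‖ * ‖Ξ ω₀ ((m:ℝ)*t₀) q‖ :=
            ContinuousLinearMap.opNorm_comp_le _ _
        _ ≤ C₀ ^ n₀ * (Real.exp (|r| * t₀) * Real.exp (r * t)) := by
            apply mul_le_mul h1 (h2.trans h3) (norm_nonneg _) (by positivity)
        _ = K * Real.exp (r * t) := by rw [hKdef]; ring
    -- choose a long time T = τ * k
    have hlogK2 : 0 ≤ Real.log (K + 2) := Real.log_nonneg (by linarith)
    set k : ℕ := max 1 ⌈(2 * Real.log (K + 2) / ε) / τ⌉₊ with hkdef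
    have hk1 : 1 ≤ k := le_max_left _ _
    have hk1' : (1:ℝ) ≤ (k:ℝ) := by exact_mod_cast hk1
    set T : ℝ := τ * (k:ℝ) with hTdef
    have hTpos : 0 < T := by
      apply mul_pos hτ; linarith
    have hTbig : Real.log (K + 2) ≤ ε / 2 * T := by
      have h1 : ((2 * Real.log (K + 2) / ε) / τ : ℝ) ≤ (k:ℝ) := by
        calc ((2 * Real.log (K + 2) / ε) / τ : ℝ) ≤ (⌈(2 * Real.log (K + 2) / ε) / τ⌉₊ : ℝ) :=
              Nat.le_ceil _
          _ ≤ (k:ℝ) := by exact_mod_cast Nat.le_max_right 1 _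
      have h2 : 2 * Real.log (K + 2) / ε ≤ T := by
        rw [hTdef]
        calc 2 * Real.log (K + 2) / ε = τ * ((2 * Real.log (K + 2) / ε) / τ) := by
              field_simp
          _ ≤ τ * (k:ℝ) := by
              exact mul_le_mul_of_nonneg_left h1 hτ.le
      rw [div_le_iff₀ hε] at h2
      linarith
    filter_upwards [hconv k hk1 (Real.exp (r * T)) (Real.exp_pos _)] with ω hω
    -- construction for a fixed ω close to ω₀
    set M₁ : ℝ := (K + 2) * Real.exp (r * T) with hM₁def
    have hM₁pos : 0 < M₁ := by positivity
    have hAU : A ω ⊆ {q : Q | ‖Ξ ω T q‖ < M₁} := by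
      intro a ha
      have h1 := hω a (hB ω ha)
      have h2 := hbound₀ T hTpos.le a
      have h3 := norm_sub_norm_le (Ξ ω T a) (Ξ ω₀ T a)
      have h4 := Real.exp_pos (r * T)
      simp only [mem_setOf_eq, hM₁def]
      have hTk : τ * (k:ℝ) = T := rfl
      rw [hTk] at h1
      nlinarith
    have hUopen : IsOpen {q : Q | ‖Ξ ω T q‖ < M₁} :=
      isOpen_lt ((hΞnormc ω T hTpos.le).norm) continuous_const
    obtain ⟨δ, hδpos, hδ⟩ := (hAcomp ω).exists_thickening_subset_open hUopen hAU
    obtain ⟨T₁, hT₁0, hT₁⟩ := hAattr ω δ hδpos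
    set T₂ : ℝ := max T₁ 1 with hT₂def
    have hT₂1 : (1:ℝ) ≤ T₂ := le_max_right _ _
    have hT₂T₁ : T₁ ≤ T₂ := le_max_left _ _
    obtain ⟨Cω, hCω1, hCω⟩ := lemA ω
    set B : ℝ := Cω ^ ⌈T₂⌉₊ with hBdef
    have hB1 : (1:ℝ) ≤ B := one_le_pow₀ hCω1
    have hBpos : (0:ℝ) < B := by linarith
    have hBq : ∀ q : Q, ‖Ξ ω T₂ q‖ ≤ B :=
      fun q => hCω ⌈T₂⌉₊ T₂ (by linarith) (Nat.le_ceil _) q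
    have key : ∀ n : ℕ, ∀ q : Q, ‖Ξ ω (T₂ + (n:ℝ) * T) q‖ ≤ B * M₁ ^ n := by
      intro n
      induction n with
      | zero =>
        intro q
        simpa using hBq q
      | succ n ih =>
        intro q
        have hnT : (0:ℝ) ≤ T₂ + (n:ℝ) * T := by positivity
        have hdec := hΞadd ω T (T₂ + (n:ℝ) * T) hTpos.le hnT q
        have hpt : ϑ ω (T₂ + (n:ℝ) * T) q ∈ Metric.thickening δ (A ω) := by
          obtain ⟨a, ha, hd⟩ := hT₁ (T₂ + (n:ℝ) * T) (by have := mul_nonneg (Nat.cast_nonneg n : (0:ℝ) ≤ (n:ℝ)) hTpos.le; linarith) q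
          exact Metric.mem_thickening_iff.mpr ⟨a, ha, hd⟩
        have hMpt : ‖Ξ ω T (ϑ ω (T₂ + (n:ℝ) * T) q)‖ ≤ M₁ := (hδ hpt).le
        have hts : T₂ + ((n:ℕ)+1 : ℕ) * T = T + (T₂ + (n:ℝ) * T) := by push_cast; ring
        calc ‖Ξ ω (T₂ + (((n:ℕ)+1 : ℕ):ℝ) * T) q‖
            = ‖(Ξ ω T (ϑ ω (T₂ + (n:ℝ)*T) q)).comp (Ξ ω (T₂ + (n:ℝ)*T) q)‖ := by
              rw [hts, hdec]
          _ ≤ ‖Ξ ω T (ϑ ω (T₂ + (n:ℝ)*T) q)‖ * ‖Ξ ω (T₂ + (n:ℝ)*T) q‖ :=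
              ContinuousLinearMap.opNorm_comp_le _ _
          _ ≤ M₁ * (B * M₁ ^ n) := by
              exact mul_le_mul hMpt (ih q) (norm_nonneg _) hM₁pos.le
          _ = B * M₁ ^ (n+1) := by ring
    -- choose the number of iterations n
    have hlogM₁ : Real.log M₁ ≤ (r + ε / 2) * T := by
      rw [hM₁def, Real.log_mul (by linarith) (Real.exp_ne_zero _), Real.log_exp]
      linarith
    set n : ℕ := ⌈(Real.log B + |r + ε| * T₂) / (ε / 2 * T)⌉₊ with hndef
    have hlogB0 : 0 ≤ Real.log B := Real.log_nonneg hB1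
    have hnge : Real.log B + |r + ε| * T₂ ≤ (n:ℝ) * (ε / 2 * T) := by
      have h1 : (Real.log B + |r + ε| * T₂) / (ε / 2 * T) ≤ (n:ℝ) := Nat.le_ceil _
      rw [div_le_iff₀ (by positivity)] at h1
      exact h1
    set tf : ℝ := T₂ + (n:ℝ) * T with htfdef
    have htfpos : 0 < tf := by positivity
    set r' : ℝ := (Real.log B + (n:ℝ) * Real.log M₁) / tf with hr'def
    have hr'mem : r' ∈ {r'' : ℝ | ∃ t > (0:ℝ), ∀ q : Q, ‖Ξ ω t q‖ ≤ Real.exp (r'' * t)} := by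
      refine ⟨tf, htfpos, fun q => ?_⟩
      have hexp : Real.exp (r' * tf) = B * M₁ ^ n := by
        rw [hr'def, div_mul_cancel₀ _ htfpos.ne', Real.exp_add, Real.exp_log hBpos,
          Real.exp_nat_mul, Real.exp_log hM₁pos]
      rw [hexp]
      exact key n q
    have hr'le : r' ≤ r + ε := by
      rw [hr'def, div_le_iff₀ htfpos]
      have h1 : (n:ℝ) * Real.log M₁ ≤ (n:ℝ) * ((r + ε/2) * T) :=
        mul_le_mul_of_nonneg_left hlogM₁ (Nat.cast_nonneg n)
      have h2 : -(|r + ε| * T₂) ≤ (r + ε) * T₂ := by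
        have := neg_abs_le (r + ε)
        nlinarith
      have h3 : (r + ε) * tf = (r + ε) * T₂ + (n:ℝ) * ((r + ε) * T) := by
        rw [htfdef]; ring
      rw [h3]
      have h4 : (n:ℝ) * ((r + ε/2) * T) + (n:ℝ) * (ε/2 * T) = (n:ℝ) * ((r + ε) * T) := by ring
      linarith
    refine iInf_le_of_le ⟨r', hr'mem⟩ ?_
    exact_mod_cast hr'le
  -- conclude
  refine le_of_forall_gt_imp_ge_of_dense fun z hz => ?_
  obtain ⟨c, hc1, hc2⟩ := EReal.exists_between_coe_real hz
  have hεpos : 0 < c - r := by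
    have : (r : EReal) < (c : EReal) := hc1
    rw [EReal.coe_lt_coe_iff] at this
    linarith
  have hls := Filter.limsup_le_of_le (by isBoundedDefault) (main (c - r) hεpos)
  calc Filter.limsup
        (fun ω => ⨅ r' : {r' : ℝ | ∃ t > (0 : ℝ), ∀ q : Q, ‖Ξ ω t q‖ ≤ Real.exp (r' * t)},
          ((r' : ℝ) : EReal)) (nhds ω₀)
      ≤ ((r + (c - r) : ℝ) : EReal) := hls
    _ = ((c : ℝ) : EReal) := by norm_num
    _ ≤ z := hc2.le
end

section
/- Let a, b, τ ∈ ℝ with b > 0, τ > 0, and a + b ≥ 0. Then: (i) there is a unique p* ≥ −1 with p*·e^{p*+1} = a/b; (ii) for every κ > 0, (a + b·e^{κτ})/κ + 1 ≥ τ·b·e^{p*+1} + 1; and (iii) if a + b > 0 then p* > −1 and equality in (ii) holds at κ = (p*+1)/τ, so the function d*(κ) := (a + b e^{κτ})/κ + 1 on (0,∞) attains the global minimum τ b e^{p*+1} + 1 at κ = τ^{−1}(p*+1). -/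
theorem stmt_16 (a b τ : ℝ) (hb : 0 < b) (hτ : 0 < τ) (hab : 0 ≤ a + b) :
    (∃! p : ℝ, -1 ≤ p ∧ p * Real.exp (p + 1) = a / b) ∧
    (∀ p : ℝ, -1 ≤ p → p * Real.exp (p + 1) = a / b →
      (∀ κ : ℝ, 0 < κ →
        τ * b * Real.exp (p + 1) + 1 ≤ (a + b * Real.exp (κ * τ)) / κ + 1) ∧
      (0 < a + b →
        -1 < p ∧
        (a + b * Real.exp (((p + 1) / τ) * τ)) / ((p + 1) / τ) + 1
          = τ * b * Real.exp (p + 1) + 1)) := by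
  set f : ℝ → ℝ := fun p => p * Real.exp (p + 1) with hf
  have hcont : Continuous f := by fun_prop
  have hderiv : ∀ x : ℝ, HasDerivAt f ((x + 1) * Real.exp (x + 1)) x := by
    intro x
    have h1 : HasDerivAt (fun p : ℝ => Real.exp (p + 1)) (Real.exp (x + 1)) x := by
      simpa [Function.comp_def] using (Real.hasDerivAt_exp (x + 1)).comp x ((hasDerivAt_id x).add_const 1)
    have h2 := (hasDerivAt_id x).mul h1
    simpa [hf, Pi.mul_def] using h2.congr_deriv (by simp only [id_eq]; ring)
  have hmono : StrictMonoOn f (Set.Ici (-1 : ℝ)) := by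
    apply strictMonoOn_of_deriv_pos (convex_Ici _) hcont.continuousOn
    intro x hx
    rw [interior_Ici] at hx
    rw [(hderiv x).deriv]
    have := Real.exp_pos (x + 1)
    have : (-1 : ℝ) < x := hx
    nlinarith [Real.exp_pos (x + 1)]
  have hle : (-1 : ℝ) ≤ a / b := by
    rw [le_div_iff₀ hb]; linarith
  constructor
  · -- existence and uniqueness
    set M := max 0 (a / b) with hM
    have h0M : (0 : ℝ) ≤ M := le_max_left _ _
    have h1M : (-1 : ℝ) ≤ M := by linarith
    have hfM : a / b ≤ f M := by
      have h1 : a / b ≤ M := le_max_right _ _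
      have h2 : (1 : ℝ) ≤ Real.exp (M + 1) := Real.one_le_exp (by linarith)
      calc a / b ≤ M := h1
        _ ≤ M * Real.exp (M + 1) := by nlinarith
    have hIVT := intermediate_value_Icc h1M hcont.continuousOn
    have hmem : a / b ∈ Set.Icc (f (-1)) (f M) := by
      constructor
      · simpa [hf] using hle
      · exact hfM
    obtain ⟨p, hp, hfp⟩ := hIVT hmem
    refine ⟨p, ⟨hp.1, hfp⟩, ?_⟩
    intro q hq
    exact hmono.injOn (Set.mem_Ici.mpr hq.1) (Set.mem_Ici.mpr hp.1) (hq.2.trans hfp.symm)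
  · intro p hp hfp
    have ha : a = b * (p * Real.exp (p + 1)) := by
      field_simp at hfp; linarith [hfp]
    constructor
    · intro κ hκ
      rw [add_le_add_iff_right, le_div_iff₀ hκ]
      -- need: τ * b * exp(p+1) * κ ≤ a + b * exp(κτ)
      have key : (κ * τ - (p + 1) + 1) * Real.exp (p + 1) ≤ Real.exp (κ * τ) := by
        have h1 : κ * τ - (p + 1) + 1 ≤ Real.exp (κ * τ - (p + 1)) :=
          Real.add_one_le_exp _
        have h2 : Real.exp (κ * τ - (p + 1)) * Real.exp (p + 1) = Real.exp (κ * τ) := by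
          rw [← Real.exp_add]; ring_nf
        nlinarith [Real.exp_pos (p + 1)]
      rw [ha]
      nlinarith [Real.exp_pos (p + 1)]
    · intro hab'
      have hp1 : -1 < p := by
        rcases lt_or_eq_of_le hp with h | h
        · exact h
        · exfalso
          rw [← h] at hfp
          simp at hfp
          -- f(-1) = -1 = a/b ⇒ a = -b ⇒ a + b = 0
          have : a = -b := by field_simp at hfp; linarith
          linarith
      have hps : (0 : ℝ) < p + 1 := by linarith
      constructor
      · exact hp1
      · rw [div_mul_cancel₀ _ hτ.ne', add_left_inj, ha]
        rw [div_div_eq_mul_div, div_eq_iff hps.ne']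
        ring
end

section
/- Let k > 1, γ > 0, β > 0, τ > 0 be reals and set R₀ := 0 if β ≤ γ, and R₀ := β·γ^{−1}·k^{−1}·(k−1)^{(k−1)/k} if β > γ. Let R ≥ R₀ and let x : ℝ → ℝ be continuous on [−τ,∞) and differentiable at every t ≥ 0 with x'(t) = −γ·x(t) + β·x(t−τ)/(1 + |x(t−τ)|^k) for all t ≥ 0, and suppose |x(θ)| ≤ R for all θ ∈ [−τ,0]. Then |x(t)| ≤ R for all t ≥ 0. -/
open Set

/-- AM-GM consequence: `k * u ≤ (k-1)^((k-1)/k) * (1 + u^k)` for `u ≥ 0`. -/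
lemma mg_key_ineq (k : ℝ) (hk : 1 < k) (u : ℝ) (hu : 0 ≤ u) :
    k * u ≤ (k - 1) ^ ((k - 1) / k) * (1 + u ^ k) := by
  have hk0 : (0:ℝ) < k := by linarith
  have hk1 : (0:ℝ) < k - 1 := by linarith
  have hc : (0:ℝ) < (k - 1) ^ ((k - 1) / k) := Real.rpow_pos_of_pos hk1 _
  have hgm := Real.geom_mean_le_arith_mean2_weighted
    (w₁ := 1 / k) (w₂ := (k - 1) / k) (p₁ := u ^ k) (p₂ := (k - 1)⁻¹)
    (by positivity) (by positivity) (Real.rpow_nonneg hu k) (by positivity)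
    (by field_simp; ring)
  have h1 : (u ^ k) ^ (1 / k) = u := by
    rw [← Real.rpow_mul hu, mul_one_div, div_self (ne_of_gt hk0), Real.rpow_one]
  have h2 : ((k - 1)⁻¹) ^ ((k - 1) / k) = ((k - 1) ^ ((k - 1) / k))⁻¹ := by
    rw [Real.inv_rpow hk1.le]
  rw [h1, h2] at hgm
  have h3 : ((k-1)/k) * (k-1)⁻¹ = 1/k := by field_simp
  rw [h3] at hgm
  -- hgm : u * ((k-1)^((k-1)/k))⁻¹ ≤ (1/k) * u^k + 1/k
  have := mul_le_mul_of_nonneg_left hgm (le_of_lt (mul_pos hk0 hc))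
  calc k * u = (k * (k - 1) ^ ((k - 1) / k)) * (u * ((k - 1) ^ ((k - 1) / k))⁻¹) := by
        field_simp
    _ ≤ (k * (k - 1) ^ ((k - 1) / k)) * (1 / k * u ^ k + 1 / k) := this
    _ = (k - 1) ^ ((k - 1) / k) * (1 + u ^ k) := by field_simp; ring

/-- The feedback bound: if `|y| ≤ R` then `β * |y / (1 + |y|^k)| ≤ γ * R`. -/
lemma mg_feedback_bound (k γ β : ℝ) (hk : 1 < k) (hγ : 0 < γ) (hβ : 0 < β)
    (R₀ : ℝ)
    (hR₀ : R₀ = if β ≤ γ then 0 else β * γ⁻¹ * k⁻¹ * (k - 1) ^ ((k - 1) / k))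
    (R : ℝ) (hR : R₀ ≤ R) (y : ℝ) (hy : |y| ≤ R) :
    β * |y / (1 + |y| ^ k)| ≤ γ * R := by
  have hk0 : (0:ℝ) < k := by linarith
  have hd : (0:ℝ) < 1 + |y| ^ k := by positivity
  have habs : |y / (1 + |y| ^ k)| = |y| / (1 + |y| ^ k) := by
    rw [abs_div, abs_of_pos hd]
  rw [habs]
  by_cases hbg : β ≤ γ
  · have hR0 : (0:ℝ) ≤ R := le_trans (le_of_eq (by rw [hR₀, if_pos hbg])) hR
    have h1 : |y| / (1 + |y| ^ k) ≤ |y| := by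
      apply div_le_self (abs_nonneg y)
      have : (0:ℝ) ≤ |y| ^ k := Real.rpow_nonneg (abs_nonneg y) k
      linarith
    have h2 : |y| / (1 + |y| ^ k) ≤ R := le_trans h1 hy
    calc β * (|y| / (1 + |y| ^ k)) ≤ γ * (|y| / (1 + |y| ^ k)) := by
          apply mul_le_mul_of_nonneg_right hbg (by positivity)
      _ ≤ γ * R := mul_le_mul_of_nonneg_left h2 hγ.le
  · rw [hR₀, if_neg hbg] at hR
    have hkey := mg_key_ineq k hk |y| (abs_nonneg y)
    have hc : (0:ℝ) < (k - 1) ^ ((k - 1) / k) := Real.rpow_pos_of_pos (by linarith) _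
    have h1 : |y| / (1 + |y| ^ k) ≤ (k - 1) ^ ((k - 1) / k) / k := by
      rw [div_le_div_iff₀ hd hk0]
      linarith [hkey]
    have h2 : β * (|y| / (1 + |y| ^ k)) ≤ β * ((k - 1) ^ ((k - 1) / k) / k) :=
      mul_le_mul_of_nonneg_left h1 hβ.le
    have h3 : β * ((k - 1) ^ ((k - 1) / k) / k) = γ * (β * γ⁻¹ * k⁻¹ * (k - 1) ^ ((k - 1) / k)) := by
      field_simp
    calc β * (|y| / (1 + |y| ^ k)) ≤ γ * (β * γ⁻¹ * k⁻¹ * (k - 1) ^ ((k - 1) / k)) := by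
          rw [← h3]; exact h2
      _ ≤ γ * R := mul_le_mul_of_nonneg_left hR hγ.le

/-- One-step invariance for `x' = -γ x + g` with `|g| ≤ γ R` on an interval. -/
lemma mg_step (γ R a b : ℝ) (hγ : 0 < γ) (x g : ℝ → ℝ)
    (hc : ContinuousOn x (Icc a b))
    (hd : ∀ t ∈ Icc a b, HasDerivAt x (-γ * x t + g t) t)
    (hg : ∀ t ∈ Icc a b, |g t| ≤ γ * R)
    (hxa : |x a| ≤ R) : ∀ t ∈ Icc a b, |x t| ≤ R := by
  intro t ht
  have hab : a ≤ b := le_trans ht.1 ht.2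
  have hexp : ∀ s : ℝ, HasDerivAt (fun u => Real.exp (γ * u)) (γ * Real.exp (γ * s)) s := by
    intro s
    have h1 : HasDerivAt (fun u : ℝ => γ * u) γ s := by
      simpa using (hasDerivAt_id s).const_mul γ
    exact ((Real.hasDerivAt_exp (γ * s)).comp s h1).congr_deriv (by ring)
  have hexpc : Continuous (fun u : ℝ => Real.exp (γ * u)) :=
    Real.continuous_exp.comp (continuous_const.mul continuous_id)
  -- upper bound: v t = exp(γ t) (x t - R) is antitone
  have hupper : x t ≤ R := by
    set v : ℝ → ℝ := fun u => Real.exp (γ * u) * (x u - R) with hv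
    have hvd : ∀ s ∈ Icc a b, HasDerivAt v (Real.exp (γ * s) * (g s - γ * R)) s := by
      intro s hs
      have h := (hexp s).mul ((hd s hs).sub_const R)
      exact h.congr_deriv (by ring)
    have hvc : ContinuousOn v (Icc a b) :=
      (hexpc.continuousOn).mul (hc.sub continuousOn_const)
    have hanti : AntitoneOn v (Icc a b) := by
      apply antitoneOn_of_deriv_nonpos (convex_Icc a b) hvc
      · intro s hs
        rw [interior_Icc] at hs
        exact ((hvd s (Ioo_subset_Icc_self hs)).differentiableAt).differentiableWithinAt
      · intro s hs
        rw [interior_Icc] at hs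
        rw [(hvd s (Ioo_subset_Icc_self hs)).deriv]
        apply mul_nonpos_of_nonneg_of_nonpos (Real.exp_nonneg _)
        have := abs_le.mp (hg s (Ioo_subset_Icc_self hs))
        linarith [this.2]
    have hva : v a ≤ 0 := by
      apply mul_nonpos_of_nonneg_of_nonpos (Real.exp_nonneg _)
      linarith [(abs_le.mp hxa).2]
    have hvt : v t ≤ v a := hanti (left_mem_Icc.mpr hab) ht ht.1
    have : Real.exp (γ * t) * (x t - R) ≤ 0 := le_trans hvt hva
    nlinarith [Real.exp_pos (γ * t)]
  -- lower bound: w t = exp(γ t) (x t + R) is monotone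
  have hlower : -R ≤ x t := by
    set w : ℝ → ℝ := fun u => Real.exp (γ * u) * (x u + R) with hw
    have hwd : ∀ s ∈ Icc a b, HasDerivAt w (Real.exp (γ * s) * (g s + γ * R)) s := by
      intro s hs
      have h := (hexp s).mul ((hd s hs).add_const R)
      exact h.congr_deriv (by ring)
    have hwc : ContinuousOn w (Icc a b) :=
      (hexpc.continuousOn).mul (hc.add continuousOn_const)
    have hmono : MonotoneOn w (Icc a b) := by
      apply monotoneOn_of_deriv_nonneg (convex_Icc a b) hwc
      · intro s hs
        rw [interior_Icc] at hs
        exact ((hwd s (Ioo_subset_Icc_self hs)).differentiableAt).differentiableWithinAt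
      · intro s hs
        rw [interior_Icc] at hs
        rw [(hwd s (Ioo_subset_Icc_self hs)).deriv]
        apply mul_nonneg (Real.exp_nonneg _)
        have := abs_le.mp (hg s (Ioo_subset_Icc_self hs))
        linarith [this.1]
    have hwa : 0 ≤ w a := by
      apply mul_nonneg (Real.exp_nonneg _)
      linarith [(abs_le.mp hxa).1]
    have hwt : w a ≤ w t := hmono (left_mem_Icc.mpr hab) ht ht.1
    have : 0 ≤ Real.exp (γ * t) * (x t + R) := le_trans hwa hwt
    nlinarith [Real.exp_pos (γ * t)]
  exact abs_le.mpr ⟨hlower, hupper⟩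

theorem stmt_17 (k γ β τ : ℝ) (hk : 1 < k) (hγ : 0 < γ) (hβ : 0 < β) (hτ : 0 < τ)
    (R₀ : ℝ)
    (hR₀ : R₀ = if β ≤ γ then 0 else β * γ⁻¹ * k⁻¹ * (k - 1) ^ ((k - 1) / k))
    (R : ℝ) (hR : R₀ ≤ R)
    (x : ℝ → ℝ)
    (hcont : ContinuousOn x (Ici (-τ)))
    (hderiv : ∀ t : ℝ, 0 ≤ t →
      HasDerivAt x (-γ * x t + β * (x (t - τ) / (1 + |x (t - τ)| ^ k))) t)
    (hinit : ∀ θ ∈ Icc (-τ) (0 : ℝ), |x θ| ≤ R) :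
    ∀ t : ℝ, 0 ≤ t → |x t| ≤ R := by
  have key : ∀ n : ℕ, ∀ t ∈ Icc (-τ) ((n : ℝ) * τ), |x t| ≤ R := by
    intro n
    induction n with
    | zero => simpa using hinit
    | succ n ih =>
      intro t ht
      by_cases hcase : t ≤ (n : ℝ) * τ
      · exact ih t ⟨ht.1, hcase⟩
      · have hn0 : (0:ℝ) ≤ (n : ℝ) * τ := mul_nonneg (Nat.cast_nonneg n) hτ.le
        have ha : (-τ : ℝ) ≤ (n : ℝ) * τ := by linarith
        have hstep := mg_step γ R ((n : ℝ) * τ) (((n : ℝ) + 1) * τ) hγ x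
          (fun u => β * (x (u - τ) / (1 + |x (u - τ)| ^ k)))
          (hcont.mono (fun u hu => by
            simp only [mem_Icc] at hu
            simp only [mem_Ici]
            linarith [hu.1]))
          (fun s hs => hderiv s (le_trans hn0 hs.1))
          (fun s hs => by
            have hsub : |x (s - τ)| ≤ R := by
              apply ih
              constructor
              · simp only [mem_Icc] at hs; linarith [hs.1]
              · simp only [mem_Icc] at hs; linarith [hs.2]
            rw [abs_mul, abs_of_pos hβ]
            exact mg_feedback_bound k γ β hk hγ hβ R₀ hR₀ R hR (x (s - τ)) hsub)
          (ih ((n : ℝ) * τ) ⟨ha, le_refl _⟩)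
        apply hstep
        constructor
        · linarith
        · have : ((n + 1 : ℕ) : ℝ) = (n : ℝ) + 1 := by push_cast; ring
          rw [this] at ht
          exact ht.2
  intro t ht
  obtain ⟨n, hn⟩ := exists_nat_gt (t / τ)
  have htn : t ≤ (n : ℝ) * τ := by
    have := (div_lt_iff₀ hτ).mp hn
    linarith
  exact key n t ⟨by linarith, htn⟩
end

section
/- Let α, β, γ, τ, R, ε be positive reals, let f : ℝ × ℝ → ℝ satisfy f(t,y)/y ≥ (α + γ + ε)/β for all t ∈ ℝ and all y with |y| ≥ R, and let w : ℝ → ℝ satisfy |w(t)| ≤ W for all t, for some W with ε·R > W. Let x : ℝ → ℝ be continuous on [−τ,∞) and differentiable at every t ≥ 0 with x'(t) = γ·x(t) − α·x(t−τ) − β·f(t, x(t)) + w(t) for all t ≥ 0, and suppose |x(θ)| ≤ R for all θ ∈ [−τ,0]. Then |x(t)| ≤ R for all t ≥ 0. -/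
open Set Filter Topology

theorem stmt_18 (α β γ τ R ε W : ℝ)
    (hα : 0 < α) (hβ : 0 < β) (hγ : 0 < γ) (hτ : 0 < τ) (hR : 0 < R) (hε : 0 < ε)
    (f : ℝ → ℝ → ℝ) (w : ℝ → ℝ)
    (hf : ∀ t y : ℝ, R ≤ |y| → (α + γ + ε) / β ≤ f t y / y)
    (hw : ∀ t : ℝ, |w t| ≤ W) (hWR : W < ε * R)
    (x : ℝ → ℝ)
    (hcont : ContinuousOn x (Ici (-τ)))
    (hderiv : ∀ t : ℝ, 0 ≤ t →
      HasDerivAt x (γ * x t - α * x (t - τ) - β * f t (x t) + w t) t)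
    (hinit : ∀ θ ∈ Icc (-τ) (0 : ℝ), |x θ| ≤ R) :
    ∀ t : ℝ, 0 ≤ t → |x t| ≤ R := by
  by_contra hcon
  push_neg at hcon
  obtain ⟨t1, ht1, ht1R⟩ := hcon
  set S : Set ℝ := {t | 0 ≤ t ∧ R < |x t|} with hS
  have hSne : S.Nonempty := ⟨t1, ht1, ht1R⟩
  have hSbdd : BddBelow S := ⟨0, fun s hs => hs.1⟩
  set t0 : ℝ := sInf S with ht0def
  have ht0nonneg : 0 ≤ t0 := le_csInf hSne fun s hs => hs.1
  have ht0mem : t0 ∈ Ici (-τ) := le_trans (by linarith) ht0nonneg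
  obtain ⟨u, -, hulim, humem⟩ := exists_seq_tendsto_sInf hSne hSbdd
  -- x(u n) → x t0
  have hxu : Tendsto (fun n => x (u n)) atTop (𝓝 (x t0)) := by
    apply (hcont t0 ht0mem).tendsto.comp
    rw [tendsto_nhdsWithin_iff]
    exact ⟨hulim, Eventually.of_forall fun n => le_trans (by linarith) (humem n).1⟩
  -- below the exit time, |x| ≤ R
  have hble : ∀ s : ℝ, -τ ≤ s → s < t0 → |x s| ≤ R := by
    intro s hs1 hs2
    rcases le_or_gt s 0 with h | h
    · exact hinit s ⟨hs1, h⟩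
    · by_contra hc
      exact absurd (csInf_le hSbdd ⟨h.le, lt_of_not_ge hc⟩) (not_le.mpr hs2)
  -- |x t0| ≥ R
  have hge : R ≤ |x t0| :=
    ge_of_tendsto hxu.abs (Filter.Eventually.of_forall fun n => (humem n).2.le)
  -- |x t0| ≤ R
  have hle : |x t0| ≤ R := by
    rcases eq_or_lt_of_le ht0nonneg with h | h
    · exact hinit t0 ⟨by linarith, by linarith⟩
    · have hcl : t0 ∈ closure (Ico 0 t0) := by
        rw [closure_Ico (ne_of_lt h)]; exact ⟨ht0nonneg, le_refl _⟩
      have hnb : (𝓝[Ico (0:ℝ) t0] t0).NeBot := mem_closure_iff_nhdsWithin_neBot.mp hcl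
      have htend : Tendsto (fun s => |x s|) (𝓝[Ico (0:ℝ) t0] t0) (𝓝 |x t0|) := by
        apply Tendsto.abs
        exact ((hcont t0 ht0mem).mono (fun s hs => le_trans (by linarith) hs.1)).tendsto
      exact le_of_tendsto htend (eventually_nhdsWithin_of_forall
        fun s hs => hble s (by linarith [hs.1]) hs.2)
  have habs : |x t0| = R := le_antisymm hle hge
  -- past value bound
  have hpast : |x (t0 - τ)| ≤ R := hble (t0 - τ) (by linarith) (by linarith)
  have hpast' := abs_le.mp hpast
  have hwt := abs_le.mp (hw t0)
  -- slope tendsto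
  have hslope : Tendsto (slope x t0)
      (𝓝[≠] t0) (𝓝 (γ * x t0 - α * x (t0 - τ) - β * f t0 (x t0) + w t0)) :=
    hasDerivAt_iff_tendsto_slope.mp (hderiv t0 ht0nonneg)
  have huneq : ∀ n, u n ≠ t0 := by
    intro n hn
    have := (humem n).2
    rw [hn, habs] at this
    exact lt_irrefl R this
  have hugt : ∀ n, t0 < u n := fun n =>
    lt_of_le_of_ne (csInf_le hSbdd (humem n)) (Ne.symm (huneq n))
  have huslope : Tendsto (fun n => slope x t0 (u n)) atTop
      (𝓝 (γ * x t0 - α * x (t0 - τ) - β * f t0 (x t0) + w t0)) := by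
    apply hslope.comp
    rw [tendsto_nhdsWithin_iff]
    exact ⟨hulim, Eventually.of_forall huneq⟩
  have hfb := hf t0 (x t0) (le_of_eq habs.symm)
  rcases abs_eq hR.le |>.mp habs with hxt0 | hxt0
  · -- x t0 = R : derivative is negative, contradiction with exceedance from right
    have hfge : (α + γ + ε) * R ≤ β * f t0 (x t0) := by
      rw [hxt0] at hfb
      have h1 : ((α + γ + ε) / β) * R ≤ f t0 R := by
        have := mul_le_mul_of_nonneg_right hfb hR.le
        rwa [div_mul_cancel₀ _ (ne_of_gt hR)] at this
      have h2 : β * ((α + γ + ε) / β) = α + γ + ε := mul_div_cancel₀ _ (ne_of_gt hβ)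
      rw [hxt0]
      nlinarith [mul_le_mul_of_nonneg_left h1 hβ.le, h2]
    have hd : γ * x t0 - α * x (t0 - τ) - β * f t0 (x t0) + w t0 < 0 := by
      nlinarith [hpast'.1, hwt.2, hfge, hxt0]
    -- eventually x (u n) > R, so slope ≥ 0
    have hev : ∀ᶠ n in atTop, 0 ≤ slope x t0 (u n) := by
      have : ∀ᶠ n in atTop, -R < x (u n) := by
        apply hxu.eventually (eventually_gt_nhds (by rw [hxt0]; linarith))
      filter_upwards [this] with n hn
      have hxn : R < x (u n) := by
        rcases lt_abs.mp ((humem n).2) with h | h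
        · exact h
        · linarith
      rw [slope_def_field]
      exact le_of_lt (div_pos (by rw [hxt0]; linarith) (by linarith [hugt n]))
    have := ge_of_tendsto huslope hev
    linarith
  · -- x t0 = -R
    have hfle : β * f t0 (x t0) ≤ -((α + γ + ε) * R) := by
      rw [hxt0] at hfb
      have h1 : f t0 (-R) ≤ ((α + γ + ε) / β) * (-R) := by
        have := mul_le_mul_of_nonpos_right hfb (by linarith : (-R : ℝ) ≤ 0)
        rwa [div_mul_cancel₀ _ (by intro h; linarith [neg_eq_zero.mp h] : (-R : ℝ) ≠ 0)] at this
      have h2 : β * ((α + γ + ε) / β) = α + γ + ε := mul_div_cancel₀ _ (ne_of_gt hβ)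
      rw [hxt0]
      nlinarith [mul_le_mul_of_nonneg_left h1 hβ.le, h2]
    have hd : 0 < γ * x t0 - α * x (t0 - τ) - β * f t0 (x t0) + w t0 := by
      nlinarith [hpast'.2, hwt.1, hfle, hxt0]
    have hev : ∀ᶠ n in atTop, slope x t0 (u n) ≤ 0 := by
      have : ∀ᶠ n in atTop, x (u n) < R := by
        apply hxu.eventually (eventually_lt_nhds (by rw [hxt0]; linarith))
      filter_upwards [this] with n hn
      have hxn : x (u n) < -R := by
        rcases lt_abs.mp ((humem n).2) with h | h
        · linarith
        · linarith
      rw [slope_def_field]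
      exact le_of_lt (div_neg_of_neg_of_pos (by rw [hxt0]; linarith) (by linarith [hugt n]))
    have := le_of_tendsto huslope hev
    linarith
end
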